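/- arXiv:2302.07477 — 7 statements merged into one kernel-verified Lean document; each statement's English description precedes it below -/
import Mathlib

section
/- Let P be a uniformly ergodic transition kernel on a nonempty finite set S (so that t_mix(P) < ∞). Then for every ε > 0 there exist m ∈ ℤ_{>0} and p ∈ (0,1] such that m/p ≤ 22 · t_mix(P) + ε and P satisfies the (m,p)-Doeblin condition. -/
/-
Write `d(n) = sup_s ‖P^n(s,·) − η‖_TV`. Stationarity of `η` gives the factorisation
`P^{a+b}(x,y) − η(y) = Σ_z (P^a(x,z) − η(z))(P^b(z,y) − η(y))`, hence `d(a+b) ≤ 2 d(a) d(b)`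
and `d(3 t_mix) ≤ 1/16`. For a kernel `R` whose rows are all within `1/16` of `η`, every row
puts at least `3/4` of its `η`-mass on points `z` with `R(x,z) ≥ (3/4) η(z)`; chaining two such
steps gives `R²(x,y) ≥ (9/16) η(y) (g(y) − 1/4)` with `g(y) = η{z : R(z,y) ≥ (3/4) η(y)}`,
and averaging `g` against `η` shows that this minorant has mass at least `9/32`. Thus `P` is
`(6 t_mix, 9/32)`-Doeblin, and `6 t_mix / (9/32) = (64/3) t_mix ≤ 22 t_mix`.
-/

open Filter

/-- `P` is a transition kernel on the finite set `S`: nonnegative entries, rows sum to 1. -/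
def IsKernel {S : Type*} [Fintype S] (P : Matrix S S ℝ) : Prop :=
  (∀ s s', 0 ≤ P s s') ∧ ∀ s, ∑ s', P s s' = 1

/-- `μ` is a probability distribution on the finite set `S`. -/
def IsProb {S : Type*} [Fintype S] (μ : S → ℝ) : Prop :=
  (∀ s, 0 ≤ μ s) ∧ ∑ s, μ s = 1

/-- Total variation distance between two distributions on a finite set. -/
noncomputable def tvDist {S : Type*} [Fintype S] (μ ν : S → ℝ) : ℝ :=
  (∑ s, |μ s - ν s|) / 2

/-- Uniform ergodicity: `sup_s ‖P^n(s,·) − η‖_TV → 0`. -/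
def UnifErgodic {S : Type*} [Fintype S] [DecidableEq S] (P : Matrix S S ℝ) (η : S → ℝ) : Prop :=
  Tendsto (fun n : ℕ => ⨆ s, tvDist ((P ^ n) s) η) atTop (nhds 0)

/-- The `(m,p)`-Doeblin minorization condition. -/
def Doeblin {S : Type*} [Fintype S] [DecidableEq S] (P : Matrix S S ℝ) (m : ℕ) (p : ℝ) : Prop :=
  ∃ ψ : S → ℝ, IsProb ψ ∧ ∀ s s', p * ψ s' ≤ (P ^ m) s s'

/-- Mixing time: least `t ≥ 1` with `sup_s ‖P^t(s,·) − η‖_TV ≤ 1/4`. -/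
noncomputable def tMix {S : Type*} [Fintype S] [DecidableEq S]
    (P : Matrix S S ℝ) (η : S → ℝ) : ℕ :=
  sInf {t : ℕ | 0 < t ∧ ∀ s, tvDist ((P ^ t) s) η ≤ 1 / 4}

/-- Minorization time: infimum of `m/p` over valid Doeblin pairs `(m,p)`. -/
noncomputable def tMinorize {S : Type*} [Fintype S] [DecidableEq S] (P : Matrix S S ℝ) : ℝ :=
  sInf {x : ℝ | ∃ (m : ℕ) (p : ℝ), 0 < m ∧ 0 < p ∧ p ≤ 1 ∧ Doeblin P m p ∧ x = m / p}

/-- Separation time for a given minorization pair `(p, ψ)`. -/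
noncomputable def tSep {S : Type*} [Fintype S] [DecidableEq S]
    (P : Matrix S S ℝ) (p : ℝ) (ψ : S → ℝ) : ℕ :=
  sInf {m : ℕ | 0 < m ∧ ∀ s s', p * ψ s' ≤ (P ^ m) s s'}

open Finset Matrix

section TotalVariation

variable {S : Type*} [Fintype S]

lemma tvDist_eq_sum_max_sub {μ ν : S → ℝ} (h : ∑ s, μ s = ∑ s, ν s) :
    tvDist μ ν = ∑ s, max (ν s - μ s) 0 := by
  have hpt : ∀ s, max (ν s - μ s) 0 = (|μ s - ν s| + (ν s - μ s)) / 2 := by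
    intro s
    rcases le_total (μ s) (ν s) with hle | hle
    · rw [max_eq_left (by linarith), abs_of_nonpos (by linarith)]; ring
    · rw [max_eq_right (by linarith), abs_of_nonneg (by linarith)]; ring
  rw [tvDist, sum_congr rfl fun s _ => hpt s, ← sum_div, sum_add_distrib, sum_sub_distrib, h,
    sub_self, add_zero]

lemma mul_sum_lt_le_tvDist {μ η : S → ℝ} (h : ∑ s, μ s = ∑ s, η s) (α : ℝ) :
    (1 - α) * ∑ s with μ s < α * η s, η s ≤ tvDist μ η := by
  rw [tvDist_eq_sum_max_sub h, mul_sum]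
  calc ∑ s with μ s < α * η s, (1 - α) * η s
      ≤ ∑ s with μ s < α * η s, max (η s - μ s) 0 :=
        sum_le_sum fun s hs => le_max_of_le_left (by linarith [(mem_filter.1 hs).2])
    _ ≤ ∑ s, max (η s - μ s) 0 :=
        sum_le_sum_of_subset_of_nonneg (filter_subset _ _) fun _ _ _ => le_max_right _ _

end TotalVariation

section Mixing

variable {S : Type*} [Fintype S]

lemma sub_eq_sum_mul_sub {A B : Matrix S S ℝ} {η : S → ℝ} (hA : ∀ x, ∑ z, A x z = 1)
    (hB : η ᵥ* B = η) (hη : ∑ z, η z = 1) (x y : S) :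
    (A * B) x y - η y = ∑ z, (A x z - η z) * (B z y - η y) := by
  have hBy : ∑ z, η z * B z y = η y := congrFun hB y
  simp only [sub_mul, mul_sub, sum_sub_distrib, ← sum_mul, mul_apply, hA, hη, hBy]
  ring

lemma tvDist_mul_le {A B : Matrix S S ℝ} {η : S → ℝ} (hA : ∀ x, ∑ z, A x z = 1)
    (hB : η ᵥ* B = η) (hη : ∑ z, η z = 1) {x : S} {u v : ℝ} (hu : tvDist (A x) η ≤ u)
    (hv : ∀ z, tvDist (B z) η ≤ v) (hv₀ : 0 ≤ v) :
    tvDist ((A * B) x) η ≤ 2 * u * v := by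
  calc tvDist ((A * B) x) η
      = (∑ y, |∑ z, (A x z - η z) * (B z y - η y)|) / 2 := by
        simp only [tvDist, sub_eq_sum_mul_sub hA hB hη]
    _ ≤ (∑ y, ∑ z, |A x z - η z| * |B z y - η y|) / 2 := by
        gcongr with y
        simpa only [abs_mul] using abs_sum_le_sum_abs (fun z => (A x z - η z) * (B z y - η y)) univ
    _ = (∑ z, |A x z - η z| * (2 * tvDist (B z) η)) / 2 := by
        rw [sum_comm]
        simp only [← mul_sum, tvDist]
        ring_nf
    _ ≤ (∑ z, |A x z - η z| * (2 * v)) / 2 := by gcongr with z; exact hv z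
    _ = 2 * tvDist (A x) η * v := by rw [← sum_mul, tvDist]; ring
    _ ≤ 2 * u * v := by gcongr

variable [DecidableEq S]

lemma isKernel_iff_mem_rowStochastic {P : Matrix S S ℝ} :
    IsKernel P ↔ P ∈ rowStochastic ℝ S :=
  mem_rowStochastic_iff_sum.symm

lemma vecMul_pow_eq_self {P : Matrix S S ℝ} {η : S → ℝ} (h : η ᵥ* P = η) (n : ℕ) :
    η ᵥ* P ^ n = η := by
  induction n with
  | zero => simp
  | succ n ih => rw [pow_succ, ← vecMul_vecMul, ih, h]

lemma tvDist_pow_add_le {P : Matrix S S ℝ} (hP : P ∈ rowStochastic ℝ S) {η : S → ℝ}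
    (hη : ∑ z, η z = 1) (hstat : η ᵥ* P = η) {a b : ℕ} {u v : ℝ}
    (ha : ∀ x, tvDist ((P ^ a) x) η ≤ u) (hb : ∀ x, tvDist ((P ^ b) x) η ≤ v) (hv₀ : 0 ≤ v)
    (x : S) : tvDist ((P ^ (a + b)) x) η ≤ 2 * u * v := by
  rw [pow_add]
  exact tvDist_mul_le (sum_row_of_mem_rowStochastic (pow_mem hP a))
    (vecMul_pow_eq_self hstat b) hη (ha x) hb hv₀

lemma tMix_spec {P : Matrix S S ℝ} {η : S → ℝ} (hUE : UnifErgodic P η) :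
    0 < tMix P η ∧ ∀ s, tvDist ((P ^ tMix P η) s) η ≤ 1 / 4 := by
  refine Nat.sInf_mem (s := {t | 0 < t ∧ ∀ s, tvDist ((P ^ t) s) η ≤ 1 / 4}) ?_
  obtain ⟨n, hn, hn₁⟩ :=
    ((hUE.eventually_lt_const (by norm_num : (0 : ℝ) < 1 / 4)).and (eventually_ge_atTop 1)).exists
  exact ⟨n, hn₁, fun s => ((le_ciSup (Set.finite_range _).bddAbove s).trans_lt hn).le⟩

end Mixing

section Minorization

variable {S : Type*} [Fintype S]

lemma exists_isProb_mul_le_of_le {A : Matrix S S ℝ} {w : S → ℝ} (hw : ∀ y, 0 ≤ w y) {p : ℝ}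
    (hp : 0 < p) (hpw : p ≤ ∑ y, w y) (hA : ∀ x y, w y ≤ A x y) :
    ∃ ψ : S → ℝ, IsProb ψ ∧ ∀ x y, p * ψ y ≤ A x y := by
  have hW : 0 < ∑ y, w y := hp.trans_le hpw
  refine ⟨fun y => w y / ∑ y, w y, ⟨fun y => div_nonneg (hw y) hW.le, ?_⟩, fun x y => ?_⟩
  · rw [← sum_div, div_self hW.ne']
  · calc p * (w y / ∑ y, w y) ≤ (∑ y, w y) * (w y / ∑ y, w y) :=
          mul_le_mul_of_nonneg_right hpw (div_nonneg (hw y) hW.le)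
      _ = w y := mul_div_cancel₀ _ hW.ne'
      _ ≤ A x y := hA x y

lemma le_mul_self_apply_of_sum_lt_le {R : Matrix S S ℝ} (hR : ∀ x y, 0 ≤ R x y) {η : S → ℝ}
    (hη : ∀ z, 0 ≤ η z) {δ : ℝ} (hlow : ∀ x, ∑ z with R x z < 3 / 4 * η z, η z ≤ δ) (x y : S) :
    9 / 16 * η y * (∑ z with 3 / 4 * η y ≤ R z y, η z - δ) ≤ (R * R) x y := by
  set H := ({z | 3 / 4 * η y ≤ R z y} : Finset S)
  have hsplit := sum_filter_add_sum_filter_not H (fun z => R x z < 3 / 4 * η z) η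
  have hbad : ∑ z ∈ H with R x z < 3 / 4 * η z, η z ≤ δ :=
    (sum_le_sum_of_subset_of_nonneg (filter_subset_filter _ (subset_univ H))
      fun z _ _ => hη z).trans (hlow x)
  calc 9 / 16 * η y * (∑ z ∈ H, η z - δ)
      ≤ 9 / 16 * η y * ∑ z ∈ H with ¬R x z < 3 / 4 * η z, η z := by
        have := hη y
        gcongr
        linarith
    _ = ∑ z ∈ H with ¬R x z < 3 / 4 * η z, (3 / 4 * η z) * (3 / 4 * η y) := by
        rw [mul_sum]; exact sum_congr rfl fun _ _ => by ring
    _ ≤ ∑ z ∈ H with ¬R x z < 3 / 4 * η z, R x z * R z y := by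
        refine sum_le_sum fun z hz => ?_
        obtain ⟨hzH, hzx⟩ := mem_filter.1 hz
        exact mul_le_mul (not_lt.1 hzx) (mem_filter.1 hzH).2
          (mul_nonneg (by norm_num) (hη y)) (hR x z)
    _ ≤ ∑ z, R x z * R z y :=
        sum_le_sum_of_subset_of_nonneg (subset_univ _) fun z _ _ => mul_nonneg (hR x z) (hR z y)
    _ = (R * R) x y := (mul_apply).symm

variable [DecidableEq S]

lemma Doeblin.of_pow {P : Matrix S S ℝ} {k m : ℕ} {p : ℝ} (h : Doeblin (P ^ k) m p) :
    Doeblin P (k * m) p := by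
  rwa [Doeblin, pow_mul]

theorem doeblin_two_of_tvDist_le {R : Matrix S S ℝ} (hR : R ∈ rowStochastic ℝ S) {η : S → ℝ}
    (hη : IsProb η) (h : ∀ x, tvDist (R x) η ≤ 1 / 16) : Doeblin R 2 (9 / 32) := by
  have hR₀ : ∀ x y, 0 ≤ R x y := fun x y => nonneg_of_mem_rowStochastic hR
  have hlow : ∀ x, ∑ z with R x z < 3 / 4 * η z, η z ≤ 1 / 4 := fun x => by
    have := mul_sum_lt_le_tvDist (μ := R x) (η := η)
      (by rw [sum_row_of_mem_rowStochastic hR, hη.2]) (3 / 4)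
    linarith [h x]
  have hhigh : ∀ x, 3 / 4 ≤ ∑ y with 3 / 4 * η y ≤ R x y, η y := fun x => by
    have := sum_filter_add_sum_filter_not univ (fun y => R x y < 3 / 4 * η y) η
    simp only [not_lt, hη.2] at this
    linarith [hlow x]
  set g : S → ℝ := fun y => ∑ z with 3 / 4 * η y ≤ R z y, η z
  have hg : 3 / 4 ≤ ∑ y, η y * g y :=
    calc (3 / 4 : ℝ) = ∑ z, η z * (3 / 4) := by rw [← sum_mul, hη.2, one_mul]
      _ ≤ ∑ z, η z * ∑ y with 3 / 4 * η y ≤ R z y, η y :=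
          sum_le_sum fun z _ => mul_le_mul_of_nonneg_left (hhigh z) (hη.1 z)
      _ = ∑ y, η y * g y := by
          simp only [g, sum_filter, mul_sum]
          rw [sum_comm]
          exact sum_congr rfl fun _ _ => sum_congr rfl fun _ _ => by split_ifs <;> ring
  set w : S → ℝ := fun y => max (9 / 16 * η y * (g y - 1 / 4)) 0
  have hw : 9 / 32 ≤ ∑ y, w y :=
    calc (9 / 32 : ℝ) ≤ 9 / 16 * (∑ y, η y * g y - 1 / 4) := by linarith
      _ = ∑ y, 9 / 16 * η y * (g y - 1 / 4) := by
          simp only [mul_assoc, ← mul_sum, mul_sub, sum_sub_distrib, ← sum_mul, hη.2, one_mul]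
      _ ≤ ∑ y, w y := sum_le_sum fun y _ => le_max_left _ _
  exact exists_isProb_mul_le_of_le (A := R ^ 2) (fun y => le_max_right _ _) (by norm_num) hw
    fun x y => max_le (sq R ▸ le_mul_self_apply_of_sum_lt_le hR₀ hη.1 hlow x y)
      (nonneg_of_mem_rowStochastic (pow_mem hR 2))

end Minorization

theorem exists_doeblin_of_unifErgodic_general
    {S : Type*} [Fintype S] [DecidableEq S]
    (P : Matrix S S ℝ) (hP : IsKernel P)
    (η : S → ℝ) (hη : IsProb η) (hstat : ∀ s', ∑ s, η s * P s s' = η s')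
    (hUE : UnifErgodic P η) :
    ∀ ε : ℝ, 0 < ε → ∃ (m : ℕ) (p : ℝ), 0 < m ∧ 0 < p ∧ p ≤ 1 ∧
      (m : ℝ) / p ≤ 22 * (tMix P η : ℝ) + ε ∧ Doeblin P m p := by
  intro ε hε
  have hP' := isKernel_iff_mem_rowStochastic.1 hP
  have hstat' : η ᵥ* P = η := funext hstat
  obtain ⟨ht, hmix⟩ := tMix_spec hUE
  set t := tMix P η
  have h2t := tvDist_pow_add_le hP' hη.2 hstat' hmix hmix (by norm_num)
  have h3t := tvDist_pow_add_le hP' hη.2 hstat' h2t hmix (by norm_num)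
  have hD : Doeblin P ((t + t + t) * 2) (9 / 32) :=
    (doeblin_two_of_tvDist_le (pow_mem hP' _) hη fun x => (h3t x).trans (by norm_num)).of_pow
  refine ⟨_, _, by omega, by norm_num, by norm_num, ?_, hD⟩
  rw [div_le_iff₀ (by norm_num)]
  push_cast
  linarith

/-- if `P` is uniformly ergodic (with stationary distribution `η`), then for every
`ε > 0` there are `m ∈ ℤ_{>0}` and `p ∈ (0,1]` with `m/p ≤ 22·t_mix(P) + ε` such that `P`
satisfies the `(m,p)`-Doeblin condition. -/
theorem exists_doeblin_of_unifErgodic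
    {S : Type*} [Fintype S] [Nonempty S] [DecidableEq S]
    (P : Matrix S S ℝ) (hP : IsKernel P)
    (η : S → ℝ) (hη : IsProb η) (hstat : ∀ s', ∑ s, η s * P s s' = η s')
    (hUE : UnifErgodic P η) :
    ∀ ε : ℝ, 0 < ε → ∃ (m : ℕ) (p : ℝ), 0 < m ∧ 0 < p ∧ p ≤ 1 ∧
      (m : ℝ) / p ≤ 22 * (tMix P η : ℝ) + ε ∧ Doeblin P m p :=
  exists_doeblin_of_unifErgodic_general P hP η hη hstat hUE
end

section
/- Let P be a transition kernel on a nonempty finite set S satisfying the (m,p)-Doeblin condition for some m ∈ ℤ_{>0} and p ∈ (0,1]. Then P is uniformly ergodic and t_mix(P) ≤ log(16) · m/p. -/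
open Filter

section DoeblinAux
set_option linter.unusedSectionVars false
variable {S : Type*} [Fintype S] [DecidableEq S]

/-- Row-vector times matrix. -/
private def vm (δ : S → ℝ) (Q : Matrix S S ℝ) : S → ℝ := fun s' => ∑ s, δ s * Q s s'

private lemma vm_mul (δ : S → ℝ) (A B : Matrix S S ℝ) : vm δ (A * B) = vm (vm δ A) B := by
  funext s'
  simp only [vm, Matrix.mul_apply, Finset.mul_sum, Finset.sum_mul]
  rw [Finset.sum_comm]
  simp [mul_assoc]

private lemma isKernel_pow {P : Matrix S S ℝ} (hP : IsKernel P) (n : ℕ) : IsKernel (P ^ n) := by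
  induction n with
  | zero =>
    refine ⟨fun s s' => ?_, fun s => ?_⟩
    · simp only [pow_zero, Matrix.one_apply]; split_ifs <;> norm_num
    · simp [Matrix.one_apply]
  | succ n ih =>
    rw [pow_succ]
    refine ⟨fun s s' => ?_, fun s => ?_⟩
    · rw [Matrix.mul_apply]
      exact Finset.sum_nonneg fun x _ => mul_nonneg (ih.1 s x) (hP.1 x s')
    · simp only [Matrix.mul_apply]
      rw [Finset.sum_comm]
      simp [← Finset.mul_sum, hP.2, ih.2]

private lemma sum_vm {Q : Matrix S S ℝ} (hQ : IsKernel Q) (δ : S → ℝ) :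
    ∑ s', vm δ Q s' = ∑ s, δ s := by
  simp only [vm]
  rw [Finset.sum_comm]
  simp [← Finset.mul_sum, hQ.2]

private lemma sum_abs_vm_le {Q : Matrix S S ℝ} (hQ : IsKernel Q) (δ : S → ℝ) :
    ∑ s', |vm δ Q s'| ≤ ∑ s, |δ s| := by
  calc ∑ s', |vm δ Q s'| ≤ ∑ s', ∑ s, |δ s| * Q s s' := by
        refine Finset.sum_le_sum fun s' _ => (Finset.abs_sum_le_sum_abs _ _).trans ?_
        refine le_of_eq (Finset.sum_congr rfl fun s _ => ?_)
        rw [abs_mul, abs_of_nonneg (hQ.1 s s')]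
    _ = ∑ s, |δ s| := by rw [Finset.sum_comm]; simp [← Finset.mul_sum, hQ.2]

private lemma doeblin_step {Q : Matrix S S ℝ} (hQ : IsKernel Q) {p : ℝ} {ψ : S → ℝ}
    (hψ : IsProb ψ) (hmin : ∀ s s', p * ψ s' ≤ Q s s') {δ : S → ℝ}
    (hδ : ∑ s, δ s = 0) :
    ∑ s', |vm δ Q s'| ≤ (1 - p) * ∑ s, |δ s| := by
  have key : ∀ s', vm δ Q s' = ∑ s, δ s * (Q s s' - p * ψ s') := by
    intro s'
    simp only [mul_sub, Finset.sum_sub_distrib, ← Finset.sum_mul, hδ, zero_mul, sub_zero, vm]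
  calc ∑ s', |vm δ Q s'|
      ≤ ∑ s', ∑ s, |δ s| * (Q s s' - p * ψ s') := by
        refine Finset.sum_le_sum fun s' _ => ?_
        rw [key s']
        refine (Finset.abs_sum_le_sum_abs _ _).trans (le_of_eq ?_)
        refine Finset.sum_congr rfl fun s _ => ?_
        rw [abs_mul, abs_of_nonneg (sub_nonneg.2 (hmin s s'))]
    _ = (1 - p) * ∑ s, |δ s| := by
        rw [Finset.sum_comm]
        simp only [← Finset.mul_sum, Finset.sum_sub_distrib, hQ.2, ← Finset.mul_sum, hψ.2,
          mul_one]
        rw [← Finset.sum_mul, mul_comm]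

private lemma contract_iter {P : Matrix S S ℝ} {m : ℕ} {p : ℝ} {ψ : S → ℝ}
    (hP : IsKernel P) (hp1 : p ≤ 1) (hψ : IsProb ψ)
    (hmin : ∀ s s', p * ψ s' ≤ (P ^ m) s s') {δ : S → ℝ} (hδ : ∑ s, δ s = 0) :
    ∀ q : ℕ, ∑ s', |vm δ (P ^ (m * q)) s'| ≤ (1 - p) ^ q * ∑ s, |δ s| := by
  intro q
  induction q with
  | zero => simp [vm, Matrix.one_apply, mul_ite, Finset.sum_ite_eq']
  | succ q ih =>
    have hpow : P ^ (m * (q + 1)) = P ^ (m * q) * P ^ m := by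
      rw [← pow_add, Nat.mul_succ]
    rw [hpow, vm_mul]
    have hδ' : ∑ s, vm δ (P ^ (m * q)) s = 0 := by
      rw [sum_vm (isKernel_pow hP _), hδ]
    calc ∑ s', |vm (vm δ (P ^ (m * q))) (P ^ m) s'|
        ≤ (1 - p) * ∑ s, |vm δ (P ^ (m * q)) s| :=
          doeblin_step (isKernel_pow hP m) hψ hmin hδ'
      _ ≤ (1 - p) * ((1 - p) ^ q * ∑ s, |δ s|) :=
          mul_le_mul_of_nonneg_left ih (by linarith)
      _ = (1 - p) ^ (q + 1) * ∑ s, |δ s| := by ring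

private lemma contract_main {P : Matrix S S ℝ} {m : ℕ} {p : ℝ} {ψ : S → ℝ}
    (hP : IsKernel P) (hp1 : p ≤ 1) (hψ : IsProb ψ)
    (hmin : ∀ s s', p * ψ s' ≤ (P ^ m) s s') {δ : S → ℝ} (hδ : ∑ s, δ s = 0) (n : ℕ) :
    ∑ s', |vm δ (P ^ n) s'| ≤ (1 - p) ^ (n / m) * ∑ s, |δ s| := by
  have hpow : P ^ n = P ^ (m * (n / m)) * P ^ (n % m) := by
    rw [← pow_add, Nat.div_add_mod]
  rw [hpow, vm_mul]
  exact (sum_abs_vm_le (isKernel_pow hP _) _).trans (contract_iter hP hp1 hψ hmin hδ _)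

private lemma vm_sub (μ ν : S → ℝ) (Q : Matrix S S ℝ) (s' : S) :
    vm (fun s => μ s - ν s) Q s' = vm μ Q s' - vm ν Q s' := by
  simp [vm, sub_mul, Finset.sum_sub_distrib]

private lemma prob_contract {P : Matrix S S ℝ} {m : ℕ} {p : ℝ} {ψ : S → ℝ}
    (hP : IsKernel P) (hp1 : p ≤ 1) (hψ : IsProb ψ)
    (hmin : ∀ s s', p * ψ s' ≤ (P ^ m) s s') {μ ν : S → ℝ} (hμ : IsProb μ) (hν : IsProb ν)
    (n : ℕ) :
    ∑ s', |vm μ (P ^ n) s' - vm ν (P ^ n) s'| ≤ 2 * (1 - p) ^ (n / m) := by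
  have hδ : ∑ s, (μ s - ν s) = 0 := by
    rw [Finset.sum_sub_distrib, hμ.2, hν.2, sub_self]
  have h1 := contract_main hP hp1 hψ hmin hδ n
  simp only [vm_sub] at h1
  refine h1.trans ?_
  have h2 : ∑ s, |μ s - ν s| ≤ 2 := by
    calc ∑ s, |μ s - ν s| ≤ ∑ s, (μ s + ν s) := by
          refine Finset.sum_le_sum fun s _ => (abs_sub _ _).trans ?_
          rw [abs_of_nonneg (hμ.1 s), abs_of_nonneg (hν.1 s)]
      _ = 2 := by rw [Finset.sum_add_distrib, hμ.2, hν.2]; norm_num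
  have h3 : (0:ℝ) ≤ (1 - p) ^ (n / m) := pow_nonneg (by linarith [hp1]) _
  calc (1 - p) ^ (n / m) * ∑ s, |μ s - ν s| ≤ (1 - p) ^ (n / m) * 2 :=
        mul_le_mul_of_nonneg_left h2 h3
    _ = 2 * (1 - p) ^ (n / m) := mul_comm _ _

private lemma row_eq_vm (Q : Matrix S S ℝ) (s : S) :
    Q s = vm (fun x => if x = s then 1 else 0) Q := by
  funext s'
  simp [vm, ite_mul, Finset.sum_ite_eq']

private lemma isProb_single (s : S) : IsProb (fun x : S => if x = s then (1:ℝ) else 0) := by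
  constructor
  · intro x; dsimp only; split_ifs <;> norm_num
  · simp

private lemma isProb_row {Q : Matrix S S ℝ} (hQ : IsKernel Q) (s : S) : IsProb (Q s) :=
  ⟨hQ.1 s, hQ.2 s⟩

end DoeblinAux

/-- if `P` satisfies the `(m,p)`-Doeblin condition, then `P` is uniformly ergodic
(with some stationary distribution `η`) and `t_mix(P) ≤ log(16)·m/p`. -/
theorem unifErgodic_and_tmix_le_of_doeblin
    {S : Type*} [Fintype S] [Nonempty S] [DecidableEq S]
    (P : Matrix S S ℝ) (hP : IsKernel P)
    (m : ℕ) (p : ℝ) (hm : 0 < m) (hp0 : 0 < p) (hp1 : p ≤ 1)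
    (hdoeb : Doeblin P m p) :
    ∃ η : S → ℝ, IsProb η ∧ (∀ s', ∑ s, η s * P s s' = η s') ∧ UnifErgodic P η ∧
      (tMix P η : ℝ) ≤ Real.log 16 * ((m : ℝ) / p) := by
  classical
  obtain ⟨ψ, hψ, hmin⟩ := hdoeb
  have hq0 : (0:ℝ) ≤ 1 - p := by linarith
  have hq1 : (1:ℝ) - p < 1 := by linarith
  obtain ⟨s₀⟩ := ‹Nonempty S›
  set a : ℕ → S → ℝ := fun n => (P ^ n) s₀ with ha
  -- the decomposition of later rows through earlier powers
  have hrow : ∀ (k n : ℕ), a (k + n) = vm (a k) (P ^ n) := by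
    intro k n
    have : P ^ (k + n) = P ^ k * P ^ n := pow_add P k n
    funext s'
    simp only [ha, this, Matrix.mul_apply, vm]
  -- general two-start contraction bound
  have key : ∀ (μ ν : S → ℝ), IsProb μ → IsProb ν → ∀ n : ℕ,
      ∑ s', |vm μ (P ^ n) s' - vm ν (P ^ n) s'| ≤ 2 * (1 - p) ^ (n / m) :=
    fun μ ν hμ hν n => prob_contract hP hp1 hψ hmin hμ hν n
  -- the decreasing bound
  set b : ℕ → ℝ := fun N => 2 * (1 - p) ^ (N / m) with hb
  have hbnn : ∀ N, 0 ≤ b N := fun N => by positivity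
  have hdivtop : Tendsto (fun N : ℕ => N / m) atTop atTop := by
    refine tendsto_atTop_atTop.2 fun c => ⟨c * m, fun n hn => ?_⟩
    exact (Nat.le_div_iff_mul_le hm).2 hn
  have hb0 : Tendsto b atTop (nhds 0) := by
    have h1 : Tendsto (fun N : ℕ => (1 - p) ^ (N / m)) atTop (nhds 0) :=
      (tendsto_pow_atTop_nhds_zero_of_lt_one hq0 hq1).comp hdivtop
    have := h1.const_mul (2:ℝ)
    simpa using this
  -- uniform Cauchy bound
  have hcau : ∀ (N n n' : ℕ), N ≤ n → N ≤ n' → ∀ s',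
      |a n s' - a n' s'| ≤ b N := by
    intro N n n' hn hn' s'
    have h1 : a n = vm (a (n - N)) (P ^ N) := by
      have := hrow (n - N) N
      rwa [show n - N + N = n from by omega] at this
    have h2 : a n' = vm (a (n' - N)) (P ^ N) := by
      have := hrow (n' - N) N
      rwa [show n' - N + N = n' from by omega] at this
    have h3 := key (a (n - N)) (a (n' - N)) (isProb_row (isKernel_pow hP _) s₀)
      (isProb_row (isKernel_pow hP _) s₀) N
    have h4 : |a n s' - a n' s'| ≤ ∑ x, |vm (a (n - N)) (P ^ N) x - vm (a (n' - N)) (P ^ N) x| := by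
      rw [h1, h2]
      exact Finset.single_le_sum (f := fun x => |vm (a (n - N)) (P ^ N) x - vm (a (n' - N)) (P ^ N) x|)
        (fun x _ => abs_nonneg _) (Finset.mem_univ s')
    exact h4.trans h3
  have hCauchy : CauchySeq a := by
    refine cauchySeq_of_le_tendsto_0 b (fun n n' N hn hn' => ?_) hb0
    rw [dist_pi_le_iff (hbnn N)]
    intro s'
    rw [Real.dist_eq]
    exact hcau N n n' hn hn' s'
  obtain ⟨η, hη⟩ := cauchySeq_tendsto_of_complete hCauchy
  have hcoord : ∀ s', Tendsto (fun n => a n s') atTop (nhds (η s')) := fun s' =>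
    ((continuous_apply s').tendsto η).comp hη
  -- η is a probability
  have hηprob : IsProb η := by
    constructor
    · intro s'
      exact ge_of_tendsto (hcoord s') (Eventually.of_forall fun n => (isKernel_pow hP n).1 s₀ s')
    · have h1 : Tendsto (fun n => ∑ s', a n s') atTop (nhds (∑ s', η s')) :=
        tendsto_finset_sum _ fun s' _ => hcoord s'
      have h2 : (fun n => ∑ s', a n s') = fun _ => (1:ℝ) := by
        funext n; exact (isKernel_pow hP n).2 s₀
      rw [h2] at h1
      exact (tendsto_nhds_unique tendsto_const_nhds h1).symm
  -- stationarity
  have hstat : ∀ s', ∑ s, η s * P s s' = η s' := by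
    intro s'
    have h1 : Tendsto (fun n => ∑ s, a n s * P s s') atTop (nhds (∑ s, η s * P s s')) :=
      tendsto_finset_sum _ fun s _ => (hcoord s).mul_const _
    have h2 : (fun n => ∑ s, a n s * P s s') = fun n => a (n + 1) s' := by
      funext n
      have : a (n + 1) = vm (a n) (P ^ 1) := hrow n 1
      rw [this]; simp [vm]
    rw [h2] at h1
    have h3 : Tendsto (fun n => a (n + 1) s') atTop (nhds (η s')) :=
      (hcoord s').comp (tendsto_add_atTop_nat 1)
    exact tendsto_nhds_unique h1 h3
  -- key TV bound
  have KB : ∀ (n : ℕ) (s : S), tvDist ((P ^ n) s) η ≤ (1 - p) ^ (n / m) := by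
    intro n s
    have hbnd : ∀ k : ℕ, ∑ s', |(P ^ n) s s' - a (k + n) s'| ≤ 2 * (1 - p) ^ (n / m) := by
      intro k
      have h1 : (P ^ n) s = vm (fun x => if x = s then (1:ℝ) else 0) (P ^ n) := row_eq_vm _ s
      have h2 : a (k + n) = vm (a k) (P ^ n) := hrow k n
      rw [h1, h2]
      exact key _ _ (isProb_single s) (isProb_row (isKernel_pow hP k) s₀) n
    have hlim : Tendsto (fun k => ∑ s', |(P ^ n) s s' - a (k + n) s'|) atTop
        (nhds (∑ s', |(P ^ n) s s' - η s'|)) := by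
      refine tendsto_finset_sum _ fun s' _ => ?_
      have : Tendsto (fun k => a (k + n) s') atTop (nhds (η s')) :=
        (hcoord s').comp (tendsto_add_atTop_nat n)
      exact ((tendsto_const_nhds.sub this).abs)
    have h5 : ∑ s', |(P ^ n) s s' - η s'| ≤ 2 * (1 - p) ^ (n / m) :=
      le_of_tendsto hlim (Eventually.of_forall hbnd)
    rw [tvDist]
    linarith
  -- uniform ergodicity
  have hUE : UnifErgodic P η := by
    have hsup_le : ∀ n, (⨆ s, tvDist ((P ^ n) s) η) ≤ (1 - p) ^ (n / m) :=
      fun n => ciSup_le fun s => KB n s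
    have hsup_nn : ∀ n, 0 ≤ ⨆ s, tvDist ((P ^ n) s) η := by
      intro n
      have h0 : 0 ≤ tvDist ((P ^ n) s₀) η := by
        rw [tvDist]; positivity
      exact h0.trans (le_ciSup (f := fun s => tvDist ((P ^ n) s) η) (Set.Finite.bddAbove (Set.finite_range _)) s₀)
    have hg : Tendsto (fun n : ℕ => (1 - p) ^ (n / m)) atTop (nhds 0) :=
      (tendsto_pow_atTop_nhds_zero_of_lt_one hq0 hq1).comp hdivtop
    exact squeeze_zero hsup_nn hsup_le hg
  -- mixing time bound
  have hlog4 : (1:ℝ) ≤ Real.log 4 := by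
    rw [Real.le_log_iff_exp_le (by norm_num)]
    have := Real.exp_one_lt_d9
    linarith
  set K : ℕ := ⌈Real.log 4 / p⌉₊ with hK
  have hKpos : 0 < K := by
    refine Nat.ceil_pos.2 ?_
    positivity
  have hKge : Real.log 4 / p ≤ (K : ℝ) := Nat.le_ceil _
  set t : ℕ := m * K with htdef
  have ht0 : 0 < t := Nat.mul_pos hm hKpos
  have htm : t / m = K := Nat.mul_div_cancel_left K hm
  have hpow14 : (1 - p) ^ K ≤ 1 / 4 := by
    have h1 : (1 - p : ℝ) ≤ Real.exp (-p) := by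
      have := Real.add_one_le_exp (-p)
      linarith
    have h2 : (1 - p) ^ K ≤ Real.exp (-p) ^ K := pow_le_pow_left₀ hq0 h1 K
    have h3 : Real.exp (-p) ^ K = Real.exp ((K : ℝ) * (-p)) := by
      rw [← Real.exp_nat_mul]
    have h4 : (K : ℝ) * (-p) ≤ -Real.log 4 := by
      have h5 : Real.log 4 ≤ (K : ℝ) * p := by
        have := mul_le_mul_of_nonneg_right hKge (le_of_lt hp0)
        rwa [div_mul_cancel₀ _ (ne_of_gt hp0)] at this
      nlinarith
    have h6 : Real.exp ((K:ℝ) * (-p)) ≤ Real.exp (-Real.log 4) :=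
      Real.exp_le_exp.2 h4
    have h7 : Real.exp (-Real.log 4) = 1 / 4 := by
      rw [Real.exp_neg, Real.exp_log (by norm_num : (0:ℝ) < 4)]
      norm_num
    calc (1 - p) ^ K ≤ Real.exp (-p) ^ K := h2
      _ = Real.exp ((K:ℝ) * (-p)) := h3
      _ ≤ 1 / 4 := h7 ▸ h6
  have htmem : t ∈ {t : ℕ | 0 < t ∧ ∀ s, tvDist ((P ^ t) s) η ≤ 1 / 4} := by
    refine ⟨ht0, fun s => ?_⟩
    calc tvDist ((P ^ t) s) η ≤ (1 - p) ^ (t / m) := KB t s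
      _ = (1 - p) ^ K := by rw [htm]
      _ ≤ 1 / 4 := hpow14
  have htmix : tMix P η ≤ t := Nat.sInf_le htmem
  have hfinal : (t : ℝ) ≤ Real.log 16 * ((m : ℝ) / p) := by
    have hlog16 : Real.log 16 = 2 * Real.log 4 := by
      rw [show (16:ℝ) = 4 ^ 2 by norm_num, Real.log_pow]
      norm_num
    have hKle : (K : ℝ) ≤ Real.log 4 / p + 1 := by
      have := Nat.ceil_lt_add_one (by positivity : (0:ℝ) ≤ Real.log 4 / p)
      exact le_of_lt this
    have h1 : (1:ℝ) ≤ Real.log 4 / p := by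
      rw [le_div_iff₀ hp0]
      nlinarith
    have hmr : (0:ℝ) ≤ (m:ℝ) := Nat.cast_nonneg m
    have : (t : ℝ) = (m : ℝ) * K := by rw [htdef]; push_cast; ring
    rw [this, hlog16]
    calc (m:ℝ) * K ≤ (m:ℝ) * (Real.log 4 / p + 1) := mul_le_mul_of_nonneg_left hKle hmr
      _ ≤ (m:ℝ) * (Real.log 4 / p + Real.log 4 / p) := by
          refine mul_le_mul_of_nonneg_left (by linarith) hmr
      _ = 2 * Real.log 4 * ((m:ℝ) / p) := by ring
  exact ⟨η, hηprob, hstat, hUE, le_trans (by exact_mod_cast Nat.cast_le.2 htmix) hfinal⟩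
end

section
/- Let M = (S, A, r, P, γ) be a finite discounted MDP and π : S → A a policy such that the induced kernel P_π satisfies the (m,p)-Doeblin condition. Then there exists a constant c ∈ ℝ such that ‖q^π − c·e‖_∞ ≤ m/p + 1 (where e is the all-ones vector), hence ‖q^π‖_span ≤ 2m/p + 2; in particular, if p ≤ 1/2, then ‖q^π‖_span ≤ 3m/p. -/
/-- oscillation bound for the `q`-function of a policy whose induced kernel
satisfies the `(m,p)`-Doeblin condition. -/
theorem qfunction_oscillation
    {S A : Type*} [Fintype S] [Nonempty S] [DecidableEq S] [Fintype A] [Nonempty A]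
    -- the MDP data
    (r : S → A → ℝ) (hr0 : ∀ s a, 0 ≤ r s a) (hr1 : ∀ s a, r s a ≤ 1)
    (P : S → A → S → ℝ) (hP0 : ∀ s a s', 0 ≤ P s a s') (hP1 : ∀ s a, ∑ s', P s a s' = 1)
    (γ : ℝ) (hγ0 : 0 < γ) (hγ1 : γ < 1)
    -- the policy and its q-function (characterized by its Bellman equation)
    (π : S → A)
    (q : S → A → ℝ) (hq : ∀ s a, q s a = r s a + γ * ∑ s', P s a s' * q s' (π s'))
    -- the (m,p)-Doeblin condition for the induced kernel P_π
    (m : ℕ) (p : ℝ) (hm : 0 < m) (hp0 : 0 < p) (hp1 : p ≤ 1)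
    (ψ : S → ℝ) (hψ0 : ∀ s', 0 ≤ ψ s') (hψ1 : ∑ s', ψ s' = 1)
    (hdoeb : ∀ s s', p * ψ s' ≤ ((Matrix.of fun u u' => P u (π u) u') ^ m) s s') :
    (∃ c : ℝ, ∀ s a, |q s a - c| ≤ (m : ℝ) / p + 1) ∧
    ((⨆ x : S × A, q x.1 x.2) - ⨅ x : S × A, q x.1 x.2) ≤ 2 * ((m : ℝ) / p) + 2 ∧
    (p ≤ 1 / 2 →
      ((⨆ x : S × A, q x.1 x.2) - ⨅ x : S × A, q x.1 x.2) ≤ 3 * ((m : ℝ) / p)) := by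
  classical
  set M : Matrix S S ℝ := Matrix.of fun u u' => P u (π u) u' with hMdef
  set v : S → ℝ := fun s => q s (π s) with hvdef
  have hvB : ∀ s, v s = r s (π s) + γ * ∑ u, M s u * v u := fun s => hq s (π s)
  -- powers of M are entrywise nonnegative with row sums 1
  have hpow : ∀ n : ℕ, (∀ s u, 0 ≤ (M ^ n) s u) ∧ (∀ s, ∑ u, (M ^ n) s u = 1) := by
    intro n
    induction n with
    | zero =>
      refine ⟨fun s u => ?_, fun s => ?_⟩
      · simp only [pow_zero, Matrix.one_apply]
        split <;> norm_num
      · simp [Matrix.one_apply]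
    | succ n ih =>
      refine ⟨fun s u => ?_, fun s => ?_⟩
      · rw [pow_succ, Matrix.mul_apply]
        exact Finset.sum_nonneg fun t _ => mul_nonneg (ih.1 s t) (hP0 t (π t) u)
      · simp only [pow_succ, Matrix.mul_apply]
        rw [Finset.sum_comm]
        have : ∀ t, ∑ u, (M ^ n) s t * M t u = (M ^ n) s t := by
          intro t
          rw [← Finset.mul_sum]
          have : ∑ u, M t u = 1 := by
            simp only [hMdef, Matrix.of_apply]
            exact hP1 t (π t)
          rw [this, mul_one]
        rw [Finset.sum_congr rfl fun t _ => this t]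
        exact ih.2 s
  -- extrema of v
  obtain ⟨smax, hsmax⟩ := Finite.exists_max v
  obtain ⟨smin, hsmin⟩ := Finite.exists_min v
  set D : ℝ := v smax - v smin with hDdef
  have hD0 : 0 ≤ D := by
    have := hsmin smax
    simp only [hDdef]; linarith
  -- averaging bounds for stochastic rows
  have avg_bound : ∀ (N : S → ℝ), (∀ u, 0 ≤ N u) → (∑ u, N u = 1) →
      ∀ (f : S → ℝ) (a b : ℝ), (∀ u, a ≤ f u) → (∀ u, f u ≤ b) →
      a ≤ (∑ u, N u * f u) ∧ (∑ u, N u * f u) ≤ b := by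
    intro N hN0 hN1 f a b hfa hfb
    constructor
    · calc a = ∑ u, N u * a := by rw [← Finset.sum_mul, hN1, one_mul]
        _ ≤ ∑ u, N u * f u :=
          Finset.sum_le_sum fun u _ => mul_le_mul_of_nonneg_left (hfa u) (hN0 u)
    · calc (∑ u, N u * f u) ≤ ∑ u, N u * b :=
          Finset.sum_le_sum fun u _ => mul_le_mul_of_nonneg_left (hfb u) (hN0 u)
        _ = b := by rw [← Finset.sum_mul, hN1, one_mul]
  -- iterated Bellman identity
  have hiter : ∀ (n : ℕ) (s : S), v s =
      (∑ j ∈ Finset.range n, γ ^ j * ∑ u, (M ^ j) s u * r u (π u))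
        + γ ^ n * ∑ u, (M ^ n) s u * v u := by
    intro n
    induction n with
    | zero =>
      intro s
      simp [Matrix.one_apply, Finset.sum_ite_eq, Finset.mem_univ]
    | succ n ih =>
      intro s
      rw [ih s]
      have hsub : ∑ u, (M ^ n) s u * v u
          = (∑ u, (M ^ n) s u * r u (π u))
            + γ * ∑ t, (M ^ (n + 1)) s t * v t := by
        have h1 : ∀ u, (M ^ n) s u * v u
            = (M ^ n) s u * r u (π u) + γ * ∑ t, (M ^ n) s u * (M u t * v t) := by
          intro u
          rw [hvB u, mul_add]
          congr 1
          rw [← Finset.mul_sum]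
          ring
        rw [Finset.sum_congr rfl fun u _ => h1 u, Finset.sum_add_distrib,
          ← Finset.mul_sum, Finset.sum_comm]
        congr 2
        refine Finset.sum_congr rfl fun t _ => ?_
        rw [pow_succ, Matrix.mul_apply, Finset.sum_mul]
        refine Finset.sum_congr rfl fun u _ => ?_
        ring
      rw [hsub, Finset.sum_range_succ]
      ring
  -- Doeblin contraction at step m
  have hcontr : ∀ s s', (∑ u, (M ^ m) s u * v u) - (∑ u, (M ^ m) s' u * v u)
      ≤ (1 - p) * D := by
    intro s s'
    have key : ∀ t : S, ∑ u, (M ^ m) t u * v u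
        = (∑ u, ((M ^ m) t u - p * ψ u) * v u) + p * ∑ u, ψ u * v u := by
      intro t
      rw [Finset.mul_sum, ← Finset.sum_add_distrib]
      refine Finset.sum_congr rfl fun u _ => ?_
      ring
    have hmass : ∀ t : S, ∑ u, ((M ^ m) t u - p * ψ u) = 1 - p := by
      intro t
      rw [Finset.sum_sub_distrib, (hpow m).2 t, ← Finset.mul_sum, hψ1, mul_one]
    have hub : ∀ t : S, ∑ u, ((M ^ m) t u - p * ψ u) * v u ≤ (1 - p) * v smax := by
      intro t
      calc ∑ u, ((M ^ m) t u - p * ψ u) * v u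
          ≤ ∑ u, ((M ^ m) t u - p * ψ u) * v smax :=
            Finset.sum_le_sum fun u _ =>
              mul_le_mul_of_nonneg_left (hsmax u) (by have := hdoeb t u; linarith)
        _ = (1 - p) * v smax := by rw [← Finset.sum_mul, hmass t]
    have hlb : ∀ t : S, (1 - p) * v smin ≤ ∑ u, ((M ^ m) t u - p * ψ u) * v u := by
      intro t
      calc (1 - p) * v smin = ∑ u, ((M ^ m) t u - p * ψ u) * v smin := by
            rw [← Finset.sum_mul, hmass t]
        _ ≤ ∑ u, ((M ^ m) t u - p * ψ u) * v u :=
            Finset.sum_le_sum fun u _ =>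
              mul_le_mul_of_nonneg_left (hsmin u) (by have := hdoeb t u; linarith)
    have := hub s
    have := hlb s'
    rw [key s, key s']
    simp only [hDdef]
    nlinarith [hub s, hlb s']
  -- span of v bounded by m / p
  have hDle : D ≤ (m : ℝ) / p := by
    have hbig : D ≤ (m : ℝ) + (1 - p) * D := by
      have e1 := hiter m smax
      have e2 := hiter m smin
      have hterm : ∀ j ∈ Finset.range m,
          γ ^ j * (∑ u, (M ^ j) smax u * r u (π u))
            - γ ^ j * (∑ u, (M ^ j) smin u * r u (π u)) ≤ 1 := by
        intro j _
        have h1 : (∑ u, (M ^ j) smax u * r u (π u)) ≤ 1 :=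
          (avg_bound _ ((hpow j).1 smax) ((hpow j).2 smax) _ 0 1
            (fun u => hr0 u (π u)) (fun u => hr1 u (π u))).2
        have h2 : (0:ℝ) ≤ ∑ u, (M ^ j) smin u * r u (π u) :=
          (avg_bound _ ((hpow j).1 smin) ((hpow j).2 smin) _ 0 1
            (fun u => hr0 u (π u)) (fun u => hr1 u (π u))).1
        have hγj0 : (0:ℝ) ≤ γ ^ j := le_of_lt (pow_pos hγ0 j)
        have hγj1 : γ ^ j ≤ 1 := pow_le_one₀ (le_of_lt hγ0) (le_of_lt hγ1)
        nlinarith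
      have hsum : (∑ j ∈ Finset.range m, γ ^ j * ∑ u, (M ^ j) smax u * r u (π u))
          - (∑ j ∈ Finset.range m, γ ^ j * ∑ u, (M ^ j) smin u * r u (π u))
          ≤ (m : ℝ) := by
        rw [← Finset.sum_sub_distrib]
        calc _ ≤ ∑ _j ∈ Finset.range m, (1:ℝ) := Finset.sum_le_sum hterm
          _ = (m : ℝ) := by simp
      have hγm0 : (0:ℝ) ≤ γ ^ m := le_of_lt (pow_pos hγ0 m)
      have hγm1 : γ ^ m ≤ 1 := pow_le_one₀ (le_of_lt hγ0) (le_of_lt hγ1)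
      have hc := hcontr smax smin
      have hmono : γ ^ m * ((∑ u, (M ^ m) smax u * v u) - ∑ u, (M ^ m) smin u * v u)
          ≤ (1 - p) * D := by
        rcases le_or_gt ((∑ u, (M ^ m) smax u * v u) - ∑ u, (M ^ m) smin u * v u) 0 with h | h
        · nlinarith
        · nlinarith
      have : D = ((∑ j ∈ Finset.range m, γ ^ j * ∑ u, (M ^ j) smax u * r u (π u))
            - (∑ j ∈ Finset.range m, γ ^ j * ∑ u, (M ^ j) smin u * r u (π u)))
          + γ ^ m * ((∑ u, (M ^ m) smax u * v u) - ∑ u, (M ^ m) smin u * v u) := by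
        rw [hDdef, e1, e2]; ring
      linarith
    rw [le_div_iff₀ hp0]
    nlinarith
  -- span of q bounded by 1 + m / p
  have hqspan : ∀ s a s' a', q s a - q s' a' ≤ 1 + (m : ℝ) / p := by
    intro s a s' a'
    have h1 : ∑ u, P s a u * v u ≤ v smax :=
      (avg_bound _ (hP0 s a) (hP1 s a) v (v smin) (v smax) hsmin hsmax).2
    have h2 : v smin ≤ ∑ u, P s' a' u * v u :=
      (avg_bound _ (hP0 s' a') (hP1 s' a') v (v smin) (v smax) hsmin hsmax).1
    have e1 := hq s a
    have e2 := hq s' a'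
    have hr1' := hr1 s a
    have hr0' := hr0 s' a'
    have hγD : γ * ((∑ u, P s a u * v u) - ∑ u, P s' a' u * v u) ≤ D := by
      have hd : (∑ u, P s a u * v u) - (∑ u, P s' a' u * v u) ≤ D := by
        simp only [hDdef]; linarith
      rcases le_or_gt ((∑ u, P s a u * v u) - ∑ u, P s' a' u * v u) 0 with h | h
      · nlinarith
      · nlinarith
    have : q s a - q s' a' ≤ 1 + D := by
      rw [e1, e2]
      have : γ * (∑ u, P s a u * v u) - γ * (∑ u, P s' a' u * v u) ≤ D := by
        rw [← mul_sub]; exact hγD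
      simp only [hvdef] at this ⊢
      linarith
    linarith
  -- assemble conclusions
  have hne : Nonempty (S × A) := inferInstance
  have hbdd : BddBelow (Set.range fun x : S × A => q x.1 x.2) :=
    (Set.finite_range _).bddBelow
  have hbdd' : BddAbove (Set.range fun x : S × A => q x.1 x.2) :=
    (Set.finite_range _).bddAbove
  set c : ℝ := ⨅ x : S × A, q x.1 x.2 with hcdef
  have hcle : ∀ s a, c ≤ q s a := fun s a => ciInf_le hbdd (⟨s, a⟩ : S × A)
  have hqlec : ∀ s a, q s a ≤ c + (1 + (m : ℝ) / p) := by
    intro s a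
    have : q s a - (1 + (m : ℝ) / p) ≤ c :=
      le_ciInf fun x => by have := hqspan s a x.1 x.2; linarith
    linarith
  have hmp0 : (0 : ℝ) ≤ (m : ℝ) / p := div_nonneg (Nat.cast_nonneg m) (le_of_lt hp0)
  have hsup_le : (⨆ x : S × A, q x.1 x.2) ≤ c + (1 + (m : ℝ) / p) :=
    ciSup_le fun x => hqlec x.1 x.2
  have hsub : (⨆ x : S × A, q x.1 x.2) - (⨅ x : S × A, q x.1 x.2) ≤ 1 + (m : ℝ) / p := by
    rw [← hcdef]; linarith
  refine ⟨⟨c, fun s a => ?_⟩, ?_, fun _ => ?_⟩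
  · rw [abs_le]
    constructor
    · have := hcle s a; linarith
    · have := hqlec s a; linarith
  · linarith
  · have hmp1 : (1 : ℝ) ≤ (m : ℝ) / p := by
      rw [le_div_iff₀ hp0]
      have : (1 : ℝ) ≤ (m : ℝ) := by exact_mod_cast hm
      nlinarith
    linarith
end

section
/- Let M = (S, A, r, P, γ) be a finite discounted MDP and π : S → A a policy such that the induced kernel P_π satisfies the (m,p)-Doeblin condition with m/p ≤ 1/(1−γ). Then the variance of the discounted cumulative reward satisfies Ψ^π(s,a) ≤ 20 (m/p)/(1−γ) for every (s,a) ∈ S × A. -/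
/-!
Write the return as `X = ∑ γ^k Y_k` with `Y_k = r(S_k, π S_k)`, so that
`Var X = ∑_{j,k} γ^{j+k} Cov(Y_j, Y_k)` (on partial sums, then in the limit by dominated
convergence). The start `S_0 = s` is deterministic, and for `1 ≤ j ≤ k` the Markov property gives
`Cov(Y_j, Y_k) = Cov(f(S_j), (P_π^{k-j} f)(S_j))` with `f = r(·, π ·)`. The Doeblin minorization
makes `P_π^m` contract the oscillation of a function by the factor `1 - p`, hence
`|Cov(Y_j, Y_k)| ≤ (1 - p)^⌊|j - k| / m⌋`, and summing gives
`Var X ≤ 2 (∑_d (1 - p)^⌊d / m⌋) / (1 - γ) = 2 (m / p) / (1 - γ)`.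
-/

open MeasureTheory ProbabilityTheory Filter Topology Finset Matrix

lemma hasSum_pow_div {θ : ℝ} (hθ0 : 0 ≤ θ) (hθ1 : θ < 1) {m : ℕ} [NeZero m] :
    HasSum (fun d : ℕ => θ ^ (d / m)) (m / (1 - θ)) := by
  rw [← (Nat.divModEquiv m).symm.hasSum_iff]
  have hblock : (fun d : ℕ => θ ^ (d / m)) ∘ (Nat.divModEquiv m).symm =
      fun q : ℕ × Fin m => θ ^ q.1 * 1 := by
    ext ⟨q, r⟩
    simp [Nat.add_comm, Nat.add_mul_div_right _ _ (NeZero.pos m), Nat.div_eq_of_lt r.is_lt]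
  have hm : HasSum (fun _ : Fin m => (1 : ℝ)) m := by
    simpa using hasSum_fintype (fun _ : Fin m => (1 : ℝ))
  rw [hblock, div_eq_inv_mul]
  exact (hasSum_geometric_of_lt_one hθ0 hθ1).mul hm
    ((summable_geometric_of_lt_one hθ0 hθ1).mul_of_nonneg hm.summable
      (fun _ => pow_nonneg hθ0 _) fun _ => zero_le_one)

lemma sum_range_sum_range_mul_dist_le {γ : ℝ} (hγ0 : 0 ≤ γ) (hγ1 : γ < 1) {g : ℕ → ℝ} {G : ℝ}
    (hg0 : ∀ d, 0 ≤ g d) (hg : HasSum g G) (N : ℕ) :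
    ∑ j ∈ range N, ∑ k ∈ range N, γ ^ j * γ ^ k * g (Nat.dist j k) ≤ 2 * G / (1 - γ) := by
  set a : ℕ → ℕ → ℝ := fun j k => γ ^ j * γ ^ k * g (Nat.dist j k)
  have ha0 : ∀ j k, 0 ≤ a j k := fun j k => mul_nonneg (by positivity) (hg0 _)
  have hsymm : ∀ j k, a j k = a k j := fun j k => by
    simp only [a, Nat.dist_comm j, mul_comm (γ ^ j)]
  have hrow : ∀ n, ∑ k ∈ range (n + 1), a n k ≤ γ ^ n * G := by
    intro n
    calc ∑ k ∈ range (n + 1), a n k ≤ ∑ k ∈ range (n + 1), γ ^ n * g (n + 1 - 1 - k) := by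
          refine sum_le_sum fun k hk => ?_
          rw [Nat.add_sub_cancel,
            ← Nat.dist_eq_sub_of_le_right (Nat.lt_succ_iff.mp (mem_range.mp hk))]
          exact mul_le_mul_of_nonneg_right (mul_le_of_le_one_right (by positivity)
            (pow_le_one₀ hγ0 hγ1.le)) (hg0 _)
      _ ≤ γ ^ n * G := by
          rw [← mul_sum, sum_range_reflect g (n + 1)]
          exact mul_le_mul_of_nonneg_left (sum_le_hasSum _ (fun d _ => hg0 d) hg) (by positivity)
  have hsum : ∀ n, ∑ j ∈ range n, ∑ k ∈ range n, a j k ≤ 2 * G * ∑ i ∈ range n, γ ^ i := by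
    intro n
    induction n with
    | zero => simp
    | succ n ih =>
      have hcol : ∑ j ∈ range n, a j n ≤ ∑ k ∈ range (n + 1), a n k := by
        simp only [hsymm _ n, sum_range_succ _ n]
        linarith [ha0 n n]
      have hlast := hrow n
      simp only [sum_range_succ, sum_add_distrib] at ih hcol hlast ⊢
      linarith
  have hgeom : ∑ n ∈ range N, γ ^ n ≤ 1 / (1 - γ) := by
    rw [one_div]
    exact sum_le_hasSum _ (fun n _ => pow_nonneg hγ0 n) (hasSum_geometric_of_lt_one hγ0 hγ1)
  have hG : 0 ≤ G := hg.nonneg hg0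
  calc _ ≤ 2 * G * ∑ n ∈ range N, γ ^ n := hsum N
    _ ≤ 2 * G * (1 / (1 - γ)) := by gcongr
    _ = 2 * G / (1 - γ) := by ring

section Oscillation

variable {S : Type*} [Fintype S]

lemma abs_mulVec_sub_mulVec_le {R : Matrix S S ℝ} {q c : ℝ} (hR0 : ∀ x y, 0 ≤ R x y)
    (hR1 : ∀ x, ∑ y, R x y = q) {g : S → ℝ} (hg : ∀ x y, |g x - g y| ≤ c) (x y : S) :
    |(R *ᵥ g) x - (R *ᵥ g) y| ≤ q * c := by
  have : Nonempty S := ⟨x⟩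
  obtain ⟨u₀, hu₀⟩ := Finite.exists_min g
  have hlow : ∀ z, q * g u₀ ≤ (R *ᵥ g) z := fun z => by
    rw [← hR1 z, sum_mul]
    exact sum_le_sum fun u _ => mul_le_mul_of_nonneg_left (hu₀ u) (hR0 z u)
  have hupp : ∀ z, (R *ᵥ g) z ≤ q * (g u₀ + c) := fun z => by
    rw [← hR1 z, sum_mul]
    exact sum_le_sum fun u _ =>
      mul_le_mul_of_nonneg_left (by linarith [(abs_le.mp (hg u u₀)).2]) (hR0 z u)
  rw [abs_sub_le_iff]
  constructor <;> linarith [hlow x, hlow y, hupp x, hupp y]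

variable [DecidableEq S] {Q : Matrix S S ℝ} {m : ℕ} {p : ℝ} {ψ : S → ℝ}

lemma abs_pow_mulVec_sub_le_of_doeblin (hQ : Q ∈ rowStochastic ℝ S) (hψ : ∑ y, ψ y = 1)
    (hdoeb : ∀ x y, p * ψ y ≤ (Q ^ m) x y) {g : S → ℝ} {c : ℝ} (hg : ∀ x y, |g x - g y| ≤ c)
    (x y : S) : |(Q ^ m *ᵥ g) x - (Q ^ m *ᵥ g) y| ≤ (1 - p) * c := by
  -- `Q ^ m - p • 1 ψᵀ` is nonnegative with row sums `1 - p`, and the rank-one part shifts every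
  -- coordinate of `Q ^ m *ᵥ g` by the same constant.
  set R : Matrix S S ℝ := Matrix.of fun x y => (Q ^ m) x y - p * ψ y
  have hR : ∀ z, (R *ᵥ g) z = (Q ^ m *ᵥ g) z - ∑ u, p * ψ u * g u := fun z => by
    simp only [R, mulVec, dotProduct, of_apply, sub_mul, sum_sub_distrib]
  have hR1 : ∀ x, ∑ y, R x y = 1 - p := fun x => by
    simp only [R, of_apply, sum_sub_distrib, ← mul_sum, hψ, mul_one,
      sum_row_of_mem_rowStochastic (pow_mem hQ m)]
  have := abs_mulVec_sub_mulVec_le (R := R) (fun x y => sub_nonneg.2 (hdoeb x y)) hR1 hg x y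
  rwa [hR, hR, sub_sub_sub_cancel_right] at this

lemma abs_pow_mulVec_sub_le_pow_div (hQ : Q ∈ rowStochastic ℝ S) (hψ : ∑ y, ψ y = 1)
    (hdoeb : ∀ x y, p * ψ y ≤ (Q ^ m) x y) {g : S → ℝ} {c : ℝ} (hg : ∀ x y, |g x - g y| ≤ c)
    (d : ℕ) (x y : S) : |(Q ^ d *ᵥ g) x - (Q ^ d *ᵥ g) y| ≤ (1 - p) ^ (d / m) * c := by
  have hblocks : ∀ i x y, |(Q ^ (m * i) *ᵥ g) x - (Q ^ (m * i) *ᵥ g) y| ≤ (1 - p) ^ i * c := by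
    intro i
    induction i with
    | zero => simpa using hg
    | succ i ih =>
      intro x y
      rw [show m * (i + 1) = m + m * i by ring, pow_add, ← mulVec_mulVec, pow_succ', mul_assoc]
      exact abs_pow_mulVec_sub_le_of_doeblin hQ hψ hdoeb ih x y
  have hsplit : Q ^ d *ᵥ g = Q ^ (d % m) *ᵥ (Q ^ (m * (d / m)) *ᵥ g) := by
    rw [mulVec_mulVec, ← pow_add, Nat.mod_add_div]
  rw [hsplit, ← one_mul ((1 - p) ^ (d / m) * c)]
  exact abs_mulVec_sub_mulVec_le (fun _ _ => nonneg_of_mem_rowStochastic (pow_mem hQ _))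
    (sum_row_of_mem_rowStochastic (pow_mem hQ _)) (hblocks (d / m)) x y

end Oscillation

section Variance

variable {Ω : Type*} [MeasurableSpace Ω] {μ : Measure Ω} [IsProbabilityMeasure μ]

lemma abs_sub_integral_le {V : Ω → ℝ} (hV : Integrable V μ) {c : ℝ}
    (hVc : ∀ ω ω', |V ω - V ω'| ≤ c) (ω : Ω) : |V ω - μ[V]| ≤ c := by
  have h : V ω - μ[V] = ∫ ω', (V ω - V ω') ∂μ := by
    rw [integral_sub (integrable_const _) hV, integral_const, probReal_univ, one_smul]
  rw [h]
  simpa using norm_integral_le_of_norm_le_const (μ := μ) (f := fun ω' => V ω - V ω')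
    (Filter.Eventually.of_forall (hVc ω))

lemma abs_covariance_le {U V : Ω → ℝ} (hU : Integrable U μ) (hV : Integrable V μ) {a b : ℝ}
    (hUa : ∀ ω ω', |U ω - U ω'| ≤ a) (hVb : ∀ ω ω', |V ω - V ω'| ≤ b) :
    |cov[U, V; μ]| ≤ a * b := by
  have hbound : ∀ ω, ‖(U ω - μ[U]) * (V ω - μ[V])‖ ≤ a * b := fun ω => by
    rw [Real.norm_eq_abs, abs_mul]
    exact mul_le_mul (abs_sub_integral_le hU hUa ω) (abs_sub_integral_le hV hVb ω)
      (abs_nonneg _) ((abs_nonneg _).trans (hUa ω ω))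
  simpa [covariance] using
    norm_integral_le_of_norm_le_const (μ := μ) (Filter.Eventually.of_forall hbound)

lemma covariance_eq_zero_of_ae_eq_const {X Y : Ω → ℝ} {c : ℝ} (h : X =ᵐ[μ] fun _ => c) :
    cov[X, Y; μ] = 0 := by
  have hX : μ[X] = c := by rw [integral_congr_ae h]; simp
  rw [covariance, hX]
  refine (integral_congr_ae ?_).trans (integral_zero Ω ℝ)
  filter_upwards [h] with ω hω
  simp [hω]

lemma tendsto_variance_of_tendsto {X : ℕ → Ω → ℝ} {Z : Ω → ℝ} {C : ℝ}
    (hX : ∀ n, AEStronglyMeasurable (X n) μ) (hXC : ∀ n ω, |X n ω| ≤ C)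
    (hlim : ∀ ω, Tendsto (fun n => X n ω) atTop (𝓝 (Z ω))) :
    Tendsto (fun n => Var[X n; μ]) atTop (𝓝 Var[Z; μ]) := by
  have hZ : AEStronglyMeasurable Z μ :=
    aestronglyMeasurable_of_tendsto_ae atTop hX (ae_of_all _ hlim)
  have hZC : ∀ ω, |Z ω| ≤ C := fun ω =>
    le_of_tendsto' ((continuous_abs.tendsto _).comp (hlim ω)) fun n => hXC n ω
  have hmemLp : ∀ {Y : Ω → ℝ}, AEStronglyMeasurable Y μ → (∀ ω, |Y ω| ≤ C) → MemLp Y 2 μ :=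
    fun hY hYC => MemLp.of_bound hY C (ae_of_all _ hYC)
  have hsq : ∀ n ω, ‖(X n ^ 2) ω‖ ≤ C ^ 2 := fun n ω => by
    simpa [sq_abs] using pow_le_pow_left₀ (abs_nonneg _) (hXC n ω) 2
  have hmean : Tendsto (fun n => μ[X n]) atTop (𝓝 μ[Z]) :=
    tendsto_integral_of_dominated_convergence (fun _ => C) hX (integrable_const C)
      (fun n => ae_of_all _ (hXC n)) (ae_of_all _ hlim)
  have hsecond : Tendsto (fun n => μ[X n ^ 2]) atTop (𝓝 μ[Z ^ 2]) :=
    tendsto_integral_of_dominated_convergence (fun _ => C ^ 2) (fun n => (hX n).pow 2)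
      (integrable_const _) (fun n => ae_of_all _ (hsq n)) (ae_of_all _ fun ω => (hlim ω).pow 2)
  rw [variance_eq_sub (hmemLp hZ hZC)]
  simp_rw [variance_eq_sub (hmemLp (hX _) (hXC _))]
  exact hsecond.sub (hmean.pow 2)

lemma variance_tsum_pow_mul_le {Y : ℕ → Ω → ℝ} {B : ℝ} (hY : ∀ k, AEStronglyMeasurable (Y k) μ)
    (hYB : ∀ k ω, |Y k ω| ≤ B) {γ : ℝ} (hγ0 : 0 ≤ γ) (hγ1 : γ < 1) {g : ℕ → ℝ} {G : ℝ}
    (hg0 : ∀ d, 0 ≤ g d) (hg : HasSum g G) (hcov : ∀ j k, |cov[Y j, Y k; μ]| ≤ g (Nat.dist j k)) :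
    Var[fun ω => ∑' k, γ ^ k * Y k ω; μ] ≤ 2 * G / (1 - γ) := by
  have hterm : ∀ k ω, ‖γ ^ k * Y k ω‖ ≤ |B| * γ ^ k := fun k ω => by
    rw [Real.norm_eq_abs, abs_mul, abs_of_nonneg (pow_nonneg hγ0 k), mul_comm]
    exact mul_le_mul_of_nonneg_right ((hYB k ω).trans (le_abs_self B)) (pow_nonneg hγ0 k)
  have hgeom := (hasSum_geometric_of_lt_one hγ0 hγ1).mul_left |B|
  have hpartial : ∀ N ω, |∑ k ∈ range N, γ ^ k * Y k ω| ≤ |B| * (1 - γ)⁻¹ := fun N ω =>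
    (abs_sum_le_sum_abs _ _).trans <| (sum_le_sum fun k _ => hterm k ω).trans <|
      sum_le_hasSum _ (fun k _ => by positivity) hgeom
  have hmemLp : ∀ k, MemLp (fun ω => γ ^ k * Y k ω) 2 μ := fun k =>
    MemLp.of_bound ((hY k).const_mul _) _ (ae_of_all _ (hterm k))
  have hvar : ∀ N, Var[fun ω => ∑ k ∈ range N, γ ^ k * Y k ω; μ] ≤ 2 * G / (1 - γ) := fun N => by
    rw [variance_fun_sum' fun k _ => hmemLp k]
    simp only [covariance_const_mul_left, covariance_const_mul_right]
    refine le_trans (sum_le_sum fun j _ => sum_le_sum fun k _ => ?_)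
      (sum_range_sum_range_mul_dist_le hγ0 hγ1 hg0 hg N)
    rw [← mul_assoc, mul_comm (γ ^ k)]
    exact mul_le_mul_of_nonneg_left ((le_abs_self _).trans (hcov j k)) (by positivity)
  have hlim : ∀ ω, Tendsto (fun N => ∑ k ∈ range N, γ ^ k * Y k ω) atTop
      (𝓝 (∑' k, γ ^ k * Y k ω)) := fun ω =>
    (hgeom.summable.of_norm_bounded fun k => hterm k ω).hasSum.tendsto_sum_nat
  exact le_of_tendsto' (tendsto_variance_of_tendsto
    (fun N => aestronglyMeasurable_fun_sum (range N) fun k _ => (hY k).const_mul _) hpartial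
    hlim) hvar

end Variance

section PathMeasure

variable {S : Type*}

def prefixCylinder (n : ℕ) (w : ℕ → S) : Set (ℕ → S) := {ω | ∀ i ≤ n, ω i = w i}

def padPath {n : ℕ} (v : Fin (n + 1) → S) : ℕ → S := fun i => v (Fin.clamp i n)

lemma padPath_of_le {n : ℕ} (v : Fin (n + 1) → S) {i : ℕ} (hi : i ≤ n) :
    padPath v i = v ⟨i, Nat.lt_succ_of_le hi⟩ := by
  simp [padPath, Fin.clamp, min_eq_left hi]

lemma padPath_restrict {n : ℕ} (ω : ℕ → S) {i : ℕ} (hi : i ≤ n) :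
    padPath (n := n) (fun j => ω j) i = ω i := by
  rw [padPath_of_le _ hi]

lemma padPath_snoc_of_le {n : ℕ} (v : Fin (n + 1) → S) (y : S) {i : ℕ} (hi : i ≤ n) :
    padPath (Fin.snoc v y : Fin (n + 2) → S) i = padPath v i := by
  rw [padPath_of_le _ hi, padPath_of_le _ (hi.trans n.le_succ)]
  exact Fin.snoc_castSucc (α := fun _ => S) (i := ⟨i, Nat.lt_succ_of_le hi⟩) ..

lemma padPath_snoc_last {n : ℕ} (v : Fin (n + 1) → S) (y : S) :
    padPath (Fin.snoc v y : Fin (n + 2) → S) (n + 1) = y := by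
  rw [padPath_of_le _ le_rfl]
  exact Fin.snoc_last (α := fun _ => S) ..

lemma prefixCylinder_congr {n : ℕ} {w w' : ℕ → S} (h : ∀ i ≤ n, w i = w' i) :
    prefixCylinder n w = prefixCylinder n w' := by
  ext ω
  exact forall₂_congr fun i hi => by rw [h i hi]

variable [MeasurableSpace S] {μ : Measure (ℕ → S)} {n : ℕ}

lemma measureReal_prefixCylinder_succ {c : (ℕ → S) → ℝ} (hc : ∀ w, 0 ≤ c w)
    {Q : Matrix S S ℝ} (hQ : ∀ x y, 0 ≤ Q x y)
    (hfdd : ∀ n, 1 ≤ n → ∀ w, μ (prefixCylinder n w) =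
      ENNReal.ofReal (c w * ∏ k ∈ Ico 1 n, Q (w k) (w (k + 1))))
    (hn : 1 ≤ n) (w : ℕ → S) :
    μ.real (prefixCylinder (n + 1) w) = μ.real (prefixCylinder n w) * Q (w n) (w (n + 1)) := by
  have hprod : ∀ n, 0 ≤ c w * ∏ k ∈ Ico 1 n, Q (w k) (w (k + 1)) := fun n =>
    mul_nonneg (hc w) (prod_nonneg fun _ _ => hQ _ _)
  rw [measureReal_def, measureReal_def, hfdd _ hn, hfdd _ (hn.trans n.le_succ),
    ENNReal.toReal_ofReal (hprod _), ENNReal.toReal_ofReal (hprod _), prod_Ico_succ_top hn,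
    mul_assoc]

variable [Fintype S]

lemma ae_apply_zero_eq {s : S} (hμ : ∀ w, w 0 ≠ s → μ (prefixCylinder n w) = 0) :
    ∀ᵐ ω ∂μ, ω 0 = s := by
  refine measure_mono_null
    (t := ⋃ (v : Fin (n + 1) → S) (_ : v 0 ≠ s), prefixCylinder n (padPath v))
    (fun ω hω => ?_) (measure_iUnion_null fun v => measure_iUnion_null fun hv => hμ _ ?_)
  · exact Set.mem_iUnion₂.2 ⟨fun i => ω i, hω, fun i hi => (padPath_restrict ω hi).symm⟩
  · rwa [padPath_of_le v (Nat.zero_le n)]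

variable [MeasurableSingletonClass S]

lemma integral_eq_sum_prefixCylinder [IsFiniteMeasure μ] (n : ℕ) {F : (ℕ → S) → ℝ}
    (hF : DependsOn F (Set.Iic n)) :
    ∫ ω, F ω ∂μ = ∑ v : Fin (n + 1) → S, μ.real (prefixCylinder n (padPath v)) * F (padPath v) := by
  set restrict : (ℕ → S) → Fin (n + 1) → S := fun ω i => ω i
  have hrestrict : Measurable restrict := measurable_pi_lambda _ fun i => measurable_pi_apply _
  have hF' : ∫ ω, F ω ∂μ = ∫ v, F (padPath v) ∂μ.map restrict := by
    rw [integral_map hrestrict.aemeasurable (measurable_of_finite _).aestronglyMeasurable]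
    exact congrArg (integral μ) (funext fun ω => hF fun i hi => (padPath_restrict ω hi).symm)
  have hfiber : ∀ v, restrict ⁻¹' {v} = prefixCylinder n (padPath v) := fun v => by
    ext ω
    simp only [Set.mem_preimage, Set.mem_singleton_iff, prefixCylinder, Set.mem_ofPred_eq,
      restrict, funext_iff, Fin.forall_iff, Nat.lt_succ_iff]
    exact forall₂_congr fun i hi => by rw [padPath_of_le v hi]
  rw [hF', integral_fintype .of_finite]
  simp_rw [map_measureReal_apply hrestrict (measurableSet_singleton _), hfiber, smul_eq_mul]

lemma integral_mul_apply_succ [IsFiniteMeasure μ] {Q : Matrix S S ℝ}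
    (hcyl : ∀ w, μ.real (prefixCylinder (n + 1) w) =
      μ.real (prefixCylinder n w) * Q (w n) (w (n + 1)))
    {F : (ℕ → S) → ℝ} (hF : DependsOn F (Set.Iic n)) (g : S → ℝ) :
    ∫ ω, F ω * g (ω (n + 1)) ∂μ = ∫ ω, F ω * (Q *ᵥ g) (ω n) ∂μ := by
  rw [integral_eq_sum_prefixCylinder (n + 1) fun ω ω' h => by
      rw [hF fun i hi => h i (Nat.le_succ_of_le hi), h (n + 1) Set.self_mem_Iic],
    integral_eq_sum_prefixCylinder n fun ω ω' h => by rw [hF h, h n Set.self_mem_Iic],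
    ← (Fin.snocEquiv fun _ => S).sum_comp, Fintype.sum_prod_type, sum_comm]
  refine sum_congr rfl fun v _ => ?_
  have hprefix : ∀ y, ∀ i ≤ n, padPath (Fin.snoc v y : Fin (n + 2) → S) i = padPath v i :=
    fun y i hi => padPath_snoc_of_le v y hi
  simp only [Fin.snocEquiv, Equiv.coe_fn_mk, hcyl, prefixCylinder_congr (hprefix _),
    hF (hprefix _), padPath_snoc_last, padPath_snoc_of_le v _ le_rfl, mulVec, dotProduct, mul_sum]
  exact sum_congr rfl fun y _ => by ring

lemma memLp_comp_apply [IsFiniteMeasure μ] (f : S → ℝ) (i : ℕ) :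
    MemLp (fun ω => f (ω i)) 2 μ :=
  MemLp.of_bound ((measurable_of_finite f).comp (measurable_pi_apply i)).aestronglyMeasurable
    (∑ x, |f x|) (ae_of_all _ fun ω => by
      simpa using single_le_sum (f := fun x => |f x|) (fun x _ => abs_nonneg _) (mem_univ (ω i)))

variable [DecidableEq S] {Q : Matrix S S ℝ}

lemma integral_mul_apply_add [IsFiniteMeasure μ]
    (hcyl : ∀ k, n ≤ k → ∀ w, μ.real (prefixCylinder (k + 1) w) =
      μ.real (prefixCylinder k w) * Q (w k) (w (k + 1)))
    {F : (ℕ → S) → ℝ} (hF : DependsOn F (Set.Iic n)) (g : S → ℝ) (d : ℕ) :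
    ∫ ω, F ω * g (ω (n + d)) ∂μ = ∫ ω, F ω * (Q ^ d *ᵥ g) (ω n) ∂μ := by
  induction d generalizing g with
  | zero => simp
  | succ d ih =>
    rw [← add_assoc, integral_mul_apply_succ (hcyl _ (Nat.le_add_right n d))
      (hF.mono (Set.Iic_subset_Iic.2 (Nat.le_add_right n d))), ih, mulVec_mulVec, ← pow_succ]

lemma covariance_apply_apply_add [IsProbabilityMeasure μ]
    (hcyl : ∀ k, n ≤ k → ∀ w, μ.real (prefixCylinder (k + 1) w) =
      μ.real (prefixCylinder k w) * Q (w k) (w (k + 1)))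
    (f g : S → ℝ) (d : ℕ) :
    cov[fun ω => f (ω n), fun ω => g (ω (n + d)); μ] =
      cov[fun ω => f (ω n), fun ω => (Q ^ d *ᵥ g) (ω n); μ] := by
  have hdep : DependsOn (fun ω : ℕ → S => f (ω n)) (Set.Iic n) := fun _ _ h =>
    congrArg f (h n Set.self_mem_Iic)
  have hmean := integral_mul_apply_add hcyl (F := fun _ => 1) (fun _ _ _ => rfl) g d
  simp only [one_mul] at hmean
  rw [covariance_eq_sub (memLp_comp_apply f n) (memLp_comp_apply g _),
    covariance_eq_sub (memLp_comp_apply f n) (memLp_comp_apply _ n)]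
  simp only [Pi.mul_apply, integral_mul_apply_add hcyl hdep, hmean]

end PathMeasure

lemma abs_covariance_apply_le_of_doeblin {S : Type*} [Fintype S] [DecidableEq S]
    [MeasurableSpace S] [MeasurableSingletonClass S] {μ : Measure (ℕ → S)} [IsProbabilityMeasure μ]
    {Q : Matrix S S ℝ} (hQ : Q ∈ rowStochastic ℝ S) {m : ℕ} {p : ℝ} {ψ : S → ℝ} (hp : p ≤ 1)
    (hψ : ∑ y, ψ y = 1) (hdoeb : ∀ x y, p * ψ y ≤ (Q ^ m) x y)
    (hcyl : ∀ k, 1 ≤ k → ∀ w, μ.real (prefixCylinder (k + 1) w) =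
      μ.real (prefixCylinder k w) * Q (w k) (w (k + 1)))
    {s : S} (hstart : ∀ᵐ ω ∂μ, ω 0 = s) {f : S → ℝ} (hf : ∀ x y, |f x - f y| ≤ 1) (j k : ℕ) :
    |cov[fun ω => f (ω j), fun ω => f (ω k); μ]| ≤ (1 - p) ^ (Nat.dist j k / m) := by
  wlog hjk : j ≤ k generalizing j k
  · rw [covariance_comm, Nat.dist_comm]
    exact this k j (le_of_not_ge hjk)
  obtain ⟨d, rfl⟩ := Nat.exists_eq_add_of_le hjk
  rw [Nat.dist_eq_sub_of_le hjk, Nat.add_sub_cancel_left]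
  rcases Nat.eq_zero_or_pos j with rfl | hj
  · rw [covariance_eq_zero_of_ae_eq_const (hstart.mono fun ω hω => congrArg f hω), abs_zero]
    exact pow_nonneg (sub_nonneg.2 hp) _
  · rw [covariance_apply_apply_add (n := j) fun k hk => hcyl k (hj.trans_le hk)]
    simpa using abs_covariance_le ((memLp_comp_apply f j).integrable one_le_two)
      ((memLp_comp_apply _ j).integrable one_le_two) (fun _ _ => hf _ _)
      (fun _ _ => abs_pow_mulVec_sub_le_pow_div hQ hψ hdoeb hf d _ _)

theorem variance_cumulative_reward_le_general
    {S A : Type*} [Fintype S] [DecidableEq S]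
    [MeasurableSpace S] [MeasurableSingletonClass S]
    -- the MDP data
    (r : S → A → ℝ) (hr0 : ∀ s a, 0 ≤ r s a) (hr1 : ∀ s a, r s a ≤ 1)
    (P : S → A → S → ℝ) (hP0 : ∀ s a s', 0 ≤ P s a s') (hP1 : ∀ s a, ∑ s', P s a s' = 1)
    (γ : ℝ) (hγ0 : 0 < γ) (hγ1 : γ < 1)
    -- the policy
    (π : S → A)
    -- the (m,p)-Doeblin condition for the induced kernel P_π, with m/p ≤ 1/(1-γ)
    (m : ℕ) (p : ℝ) (hm : 0 < m) (hp0 : 0 < p) (hp1 : p ≤ 1)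
    (ψ : S → ℝ) (hψ1 : ∑ s', ψ s' = 1)
    (hdoeb : ∀ s s', p * ψ s' ≤ ((Matrix.of fun u u' => P u (π u) u') ^ m) s s')
    -- the path measures of the Markov chain started from (s,a)
    (μ : S → A → Measure (ℕ → S)) (hμ : ∀ s a, IsProbabilityMeasure (μ s a))
    (hfdd : ∀ s a (n : ℕ), 1 ≤ n → ∀ w : ℕ → S,
      μ s a {ω | ∀ i ≤ n, ω i = w i} =
        ENNReal.ofReal ((if w 0 = s then (1 : ℝ) else 0) * P s a (w 1) *
          ∏ k ∈ Finset.Ico 1 n, P (w k) (π (w k)) (w (k + 1)))) :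
    ∀ s a, variance (fun ω => ∑' k : ℕ, γ ^ k * r (ω k) (π (ω k))) (μ s a) ≤
      20 * ((m : ℝ) / p) / (1 - γ) := by
  intro s a
  have : NeZero m := ⟨hm.ne'⟩
  have hQ : Matrix.of (fun u u' => P u (π u) u') ∈ rowStochastic ℝ S :=
    mem_rowStochastic_iff_sum.2 ⟨fun x y => hP0 x (π x) y, fun x => hP1 x (π x)⟩
  have hcyl := fun n (hn : 1 ≤ n) => measureReal_prefixCylinder_succ
    (Q := Matrix.of fun u u' => P u (π u) u') (fun w => mul_nonneg (by positivity) (hP0 s a _))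
    (fun x y => hP0 x (π x) y) (hfdd s a) hn
  have hstart : ∀ᵐ ω ∂μ s a, ω 0 = s :=
    ae_apply_zero_eq (n := 1) fun w hw => by simp [prefixCylinder, hfdd s a 1 le_rfl w, hw]
  have hθ : 0 ≤ 1 - p := sub_nonneg.2 hp1
  have hcov := abs_covariance_apply_le_of_doeblin (μ := μ s a) hQ hp1 hψ1 hdoeb hcyl hstart
    (f := fun x => r x (π x)) fun x y => abs_sub_le_iff.2
      ⟨by linarith [hr1 x (π x), hr0 y (π y)], by linarith [hr1 y (π y), hr0 x (π x)]⟩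
  have hvar := variance_tsum_pow_mul_le (μ := μ s a) (Y := fun k ω => r (ω k) (π (ω k))) (B := 1)
    (fun k => ((measurable_of_finite fun x => r x (π x)).comp
      (measurable_pi_apply k)).aestronglyMeasurable)
    (fun k ω => abs_le.2 ⟨by linarith [hr0 (ω k) (π (ω k))], hr1 _ _⟩) hγ0.le hγ1
    (fun d => pow_nonneg hθ _) (hasSum_pow_div hθ (by linarith)) hcov
  rw [sub_sub_cancel] at hvar
  exact hvar.trans (by gcongr; norm_num)

/-- variance bound `Ψ^π(s,a) ≤ 20 (m/p)/(1−γ)` for the discounted cumulative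
reward of a policy whose induced kernel is `(m,p)`-Doeblin with `m/p ≤ 1/(1−γ)`.

The Markov chain started from `(s,a)` (i.e. `S₀ = s`, `S₁ ∼ P_{s,a}`, and
`S_{k+1} ∼ P_π(S_k,·)` for `k ≥ 1`) is encoded by its path measure `μ s a` on `ℕ → S`,
characterized through its finite-dimensional cylinder probabilities. -/
theorem variance_cumulative_reward_le
    {S A : Type*} [Fintype S] [Nonempty S] [DecidableEq S] [Fintype A] [Nonempty A]
    [MeasurableSpace S] [MeasurableSingletonClass S]
    -- the MDP data
    (r : S → A → ℝ) (hr0 : ∀ s a, 0 ≤ r s a) (hr1 : ∀ s a, r s a ≤ 1)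
    (P : S → A → S → ℝ) (hP0 : ∀ s a s', 0 ≤ P s a s') (hP1 : ∀ s a, ∑ s', P s a s' = 1)
    (γ : ℝ) (hγ0 : 0 < γ) (hγ1 : γ < 1)
    -- the policy
    (π : S → A)
    -- the (m,p)-Doeblin condition for the induced kernel P_π, with m/p ≤ 1/(1-γ)
    (m : ℕ) (p : ℝ) (hm : 0 < m) (hp0 : 0 < p) (hp1 : p ≤ 1)
    (ψ : S → ℝ) (hψ0 : ∀ s', 0 ≤ ψ s') (hψ1 : ∑ s', ψ s' = 1)
    (hdoeb : ∀ s s', p * ψ s' ≤ ((Matrix.of fun u u' => P u (π u) u') ^ m) s s')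
    (hmp : (m : ℝ) / p ≤ 1 / (1 - γ))
    -- the path measures of the Markov chain started from (s,a)
    (μ : S → A → Measure (ℕ → S)) (hμ : ∀ s a, IsProbabilityMeasure (μ s a))
    (hfdd : ∀ s a (n : ℕ), 1 ≤ n → ∀ w : ℕ → S,
      μ s a {ω | ∀ i ≤ n, ω i = w i} =
        ENNReal.ofReal ((if w 0 = s then (1 : ℝ) else 0) * P s a (w 1) *
          ∏ k ∈ Finset.Ico 1 n, P (w k) (π (w k)) (w (k + 1)))) :
    ∀ s a, variance (fun ω => ∑' k : ℕ, γ ^ k * r (ω k) (π (ω k))) (μ s a) ≤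
      20 * ((m : ℝ) / p) / (1 - γ) :=
  variance_cumulative_reward_le_general r hr0 hr1 P hP0 hP1 γ hγ0 hγ1 π m p hm hp0 hp1 ψ hψ1 hdoeb μ
    hμ hfdd
end

section
/- Let M = (S, A, r, P, γ) be a finite discounted MDP and π : S → A a policy such that the induced kernel P_π satisfies the (m,p)-Doeblin condition with m/p ≤ 1/(1−γ). Then ‖(I − γ P^π)^{-1} σ^π‖_∞ ≤ 80 √(m/p) / (1−γ), where σ^π ∈ ℝ^{S×A} is the vector with entries σ^π(s,a). -/
/-!
Write `B = 1 - γ P^π`. Since `P^π` is stochastic and `γ < 1`, `B` is inverse-monotone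
(a minimum-principle argument), so `B⁻¹` has nonnegative rows of mass `1/(1-γ)` and
Cauchy–Schwarz gives `((B⁻¹σ) x)² ≤ (B⁻¹σ²) x / (1-γ)`. The Doeblin condition contracts the
oscillation of `P_π^m v` by `1-p`; unrolling the Bellman equation `m` steps then bounds the
oscillation of `v^π`, hence of `q^π`, by `1 + m/p`. With `c = min q^π`, the vector
`h = 2(1 + m/p)/(1-γ) - γ (q^π - c)²` satisfies `σ² ≤ B h`, so `B⁻¹σ² ≤ h ≤ 2(1 + m/p)/(1-γ)`.
As `m/p ≥ 1`, this yields the bound with `2` in place of `80`.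
-/

open Finset Matrix Function

section WeightedSums

variable {ι : Type*} [Fintype ι] {w w' f : ι → ℝ}

lemma sum_mul_le_sum_mul_of_le {b : ℝ} (hw : ∀ i, 0 ≤ w i) (hf : ∀ i, f i ≤ b) :
    ∑ i, w i * f i ≤ (∑ i, w i) * b := by
  rw [sum_mul]
  exact sum_le_sum fun i _ => mul_le_mul_of_nonneg_left (hf i) (hw i)

lemma sum_mul_le_sum_mul_of_ge {b : ℝ} (hw : ∀ i, 0 ≤ w i) (hf : ∀ i, b ≤ f i) :
    (∑ i, w i) * b ≤ ∑ i, w i * f i := by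
  rw [sum_mul]
  exact sum_le_sum fun i _ => mul_le_mul_of_nonneg_left (hf i) (hw i)

lemma sum_mul_sub_sum_mul_le {D : ℝ} (hw : ∀ i, 0 ≤ w i) (hw' : ∀ i, 0 ≤ w' i)
    (hsum : ∑ i, w' i = ∑ i, w i) (hf : ∀ i j, f i - f j ≤ D) :
    ∑ i, w i * f i - ∑ i, w' i * f i ≤ (∑ i, w i) * D := by
  cases isEmpty_or_nonempty ι
  · simp
  obtain ⟨j, hj⟩ := Finite.exists_min f
  have hup := sum_mul_le_sum_mul_of_le hw fun i => show f i ≤ f j + D by linarith [hf i j]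
  have hlow := sum_mul_le_sum_mul_of_ge hw' hj
  rw [hsum] at hlow
  linarith

lemma sq_sum_mul_le (hw : ∀ i, 0 ≤ w i) :
    (∑ i, w i * f i) ^ 2 ≤ (∑ i, w i) * ∑ i, w i * f i ^ 2 :=
  sum_sq_le_sum_mul_sum_of_sq_le_mul _ (fun i _ => hw i)
    (fun i _ => mul_nonneg (hw i) (sq_nonneg _)) fun i _ => (by ring : _ = _).le

end WeightedSums

namespace Matrix

variable {X : Type*} [Fintype X] [DecidableEq X] {M : Matrix X X ℝ}

lemma mulVec_sub_mulVec_le_of_mem_rowStochastic (hM : M ∈ rowStochastic ℝ X) {f : X → ℝ}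
    {D : ℝ} (hf : ∀ i j, f i - f j ≤ D) (x y : X) : (M *ᵥ f) x - (M *ᵥ f) y ≤ D := by
  simpa [mulVec, dotProduct, sum_row_of_mem_rowStochastic hM] using
    sum_mul_sub_sum_mul_le (w := M x) (w' := M y) (fun _ => hM.1 _ _) (fun _ => hM.1 _ _)
      (by simp [sum_row_of_mem_rowStochastic hM]) hf

lemma mulVec_sub_mulVec_le_of_doeblin (hM : M ∈ rowStochastic ℝ X) {p : ℝ} {ψ : X → ℝ}
    (hψ : ∑ j, ψ j = 1) (hMψ : ∀ i j, p * ψ j ≤ M i j) {f : X → ℝ} {D : ℝ}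
    (hf : ∀ i j, f i - f j ≤ D) (x y : X) :
    (M *ᵥ f) x - (M *ᵥ f) y ≤ (1 - p) * D := by
  have hmass : ∀ i, ∑ j, (M i j - p * ψ j) = 1 - p := fun i => by
    rw [sum_sub_distrib, ← mul_sum, hψ, sum_row_of_mem_rowStochastic hM, mul_one]
  have hsplit : (M *ᵥ f) x - (M *ᵥ f) y =
      ∑ j, (M x j - p * ψ j) * f j - ∑ j, (M y j - p * ψ j) * f j := by
    simp only [mulVec, dotProduct, sub_mul, sum_sub_distrib]
    ring
  rw [hsplit, ← hmass x]
  exact sum_mul_sub_sum_mul_le (fun j => sub_nonneg.2 (hMψ x j))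
    (fun j => sub_nonneg.2 (hMψ y j)) (by rw [hmass, hmass]) hf

lemma eq_sum_pow_mulVec_add_of_eq_add_smul_mulVec {g v : X → ℝ} {γ : ℝ}
    (hv : v = g + γ • M *ᵥ v) (k : ℕ) :
    v = ∑ t ∈ range k, γ ^ t • M ^ t *ᵥ g + γ ^ k • M ^ k *ᵥ v := by
  induction k with
  | zero => simp
  | succ k ih =>
    have hstep : M ^ k *ᵥ v = M ^ k *ᵥ g + γ • M ^ (k + 1) *ᵥ v := by
      conv_lhs => rw [hv]
      rw [mulVec_add, mulVec_smul, mulVec_mulVec, ← pow_succ]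
    conv_lhs => rw [ih]
    rw [hstep, smul_add, smul_smul, ← pow_succ, sum_range_succ, add_assoc]

lemma sub_le_of_eq_add_smul_mulVec_of_doeblin (hM : M ∈ rowStochastic ℝ X) {m : ℕ} {p : ℝ}
    (hp0 : 0 < p) (hp1 : p ≤ 1) {ψ : X → ℝ} (hψ : ∑ j, ψ j = 1)
    (hdoeb : ∀ i j, p * ψ j ≤ (M ^ m) i j) {γ : ℝ} (hγ0 : 0 ≤ γ) (hγ1 : γ ≤ 1)
    {g v : X → ℝ} {G : ℝ} (hg : ∀ i j, g i - g j ≤ G) (hv : v = g + γ • M *ᵥ v) (x y : X) :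
    v x - v y ≤ m * G / p := by
  have : Nonempty X := ⟨x⟩
  obtain ⟨imax, himax⟩ := Finite.exists_max v
  obtain ⟨imin, himin⟩ := Finite.exists_min v
  set D := v imax - v imin with hD_def
  have hvD : ∀ i j, v i - v j ≤ D := fun i j => by linarith [himax i, himin j]
  have hG : 0 ≤ G := by simpa using hg x x
  have hD : 0 ≤ D := by simpa using hvD x x
  have hγt : ∀ t : ℕ, 0 ≤ γ ^ t ∧ γ ^ t ≤ 1 := fun t => ⟨pow_nonneg hγ0 t, pow_le_one₀ hγ0 hγ1⟩
  have hhead : ∀ t, γ ^ t * ((M ^ t *ᵥ g) imax - (M ^ t *ᵥ g) imin) ≤ G := fun t =>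
    calc _ ≤ γ ^ t * G := mul_le_mul_of_nonneg_left
            (mulVec_sub_mulVec_le_of_mem_rowStochastic (pow_mem hM t) hg _ _) (hγt t).1
      _ ≤ G := mul_le_of_le_one_left hG (hγt t).2
  have htail : γ ^ m * ((M ^ m *ᵥ v) imax - (M ^ m *ᵥ v) imin) ≤ (1 - p) * D :=
    calc _ ≤ γ ^ m * ((1 - p) * D) := mul_le_mul_of_nonneg_left
            (mulVec_sub_mulVec_le_of_doeblin (pow_mem hM m) hψ hdoeb hvD _ _) (hγt m).1
      _ ≤ (1 - p) * D := mul_le_of_le_one_left (by nlinarith) (hγt m).2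
  have hexpand := congrFun (eq_sum_pow_mulVec_add_of_eq_add_smul_mulVec hv m)
  have hrec : D ≤ m * G + (1 - p) * D := by
    calc D = ∑ t ∈ range m, γ ^ t * ((M ^ t *ᵥ g) imax - (M ^ t *ᵥ g) imin)
          + γ ^ m * ((M ^ m *ᵥ v) imax - (M ^ m *ᵥ v) imin) := by
          rw [hD_def, hexpand imax, hexpand imin]
          simp only [Pi.add_apply, Finset.sum_apply, Pi.smul_apply, smul_eq_mul, mul_sub,
            sum_sub_distrib]
          ring
      _ ≤ ∑ _t ∈ range m, G + (1 - p) * D := add_le_add (sum_le_sum fun t _ => hhead t) htail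
      _ = m * G + (1 - p) * D := by simp
  calc v x - v y ≤ D := hvD x y
    _ ≤ m * G / p := by rw [le_div_iff₀ hp0]; linarith

lemma one_sub_smul_mulVec (γ : ℝ) (z : X → ℝ) : (1 - γ • M) *ᵥ z = z - γ • M *ᵥ z := by
  rw [sub_mulVec, smul_mulVec, one_mulVec]

lemma nonneg_of_one_sub_smul_mulVec_nonneg (hM : M ∈ rowStochastic ℝ X) {γ : ℝ} (hγ0 : 0 ≤ γ)
    (hγ1 : γ < 1) {z : X → ℝ} (hz : 0 ≤ (1 - γ • M) *ᵥ z) : 0 ≤ z := by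
  intro x
  have : Nonempty X := ⟨x⟩
  obtain ⟨i, hi⟩ := Finite.exists_min z
  have hmean : z i ≤ (M *ᵥ z) i := by
    simpa [mulVec, dotProduct, sum_row_of_mem_rowStochastic hM] using
      sum_mul_le_sum_mul_of_ge (w := M i) (fun _ => hM.1 _ _) hi
  have hzi : γ * (M *ᵥ z) i ≤ z i := by
    simpa [one_sub_smul_mulVec] using hz i
  have : 0 ≤ z i := by nlinarith
  exact this.trans (hi x)

lemma isUnit_one_sub_smul (hM : M ∈ rowStochastic ℝ X) {γ : ℝ} (hγ0 : 0 ≤ γ) (hγ1 : γ < 1) :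
    IsUnit (1 - γ • M) := by
  have hle : ∀ z z' : X → ℝ, (1 - γ • M) *ᵥ z = (1 - γ • M) *ᵥ z' → z' ≤ z := fun z z' h =>
    sub_nonneg.1 <| nonneg_of_one_sub_smul_mulVec_nonneg hM hγ0 hγ1 <| by
      rw [mulVec_sub, h, sub_self]
  exact mulVec_injective_iff_isUnit.1 fun z z' h => le_antisymm (hle _ _ h.symm) (hle _ _ h)

lemma one_sub_smul_mulVec_inv_mulVec (hM : M ∈ rowStochastic ℝ X) {γ : ℝ} (hγ0 : 0 ≤ γ)
    (hγ1 : γ < 1) (f : X → ℝ) : (1 - γ • M) *ᵥ ((1 - γ • M)⁻¹ *ᵥ f) = f := by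
  rw [mulVec_mulVec, mul_nonsing_inv _ ((isUnit_iff_isUnit_det _).1
    (isUnit_one_sub_smul hM hγ0 hγ1)), one_mulVec]

lemma inv_one_sub_smul_mulVec_mulVec (hM : M ∈ rowStochastic ℝ X) {γ : ℝ} (hγ0 : 0 ≤ γ)
    (hγ1 : γ < 1) (f : X → ℝ) : (1 - γ • M)⁻¹ *ᵥ ((1 - γ • M) *ᵥ f) = f := by
  rw [mulVec_mulVec, nonsing_inv_mul _ ((isUnit_iff_isUnit_det _).1
    (isUnit_one_sub_smul hM hγ0 hγ1)), one_mulVec]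

lemma inv_one_sub_smul_mulVec_mono (hM : M ∈ rowStochastic ℝ X) {γ : ℝ} (hγ0 : 0 ≤ γ)
    (hγ1 : γ < 1) {f f' : X → ℝ} (h : f ≤ f') :
    (1 - γ • M)⁻¹ *ᵥ f ≤ (1 - γ • M)⁻¹ *ᵥ f' := by
  rw [← sub_nonneg, ← mulVec_sub]
  refine nonneg_of_one_sub_smul_mulVec_nonneg hM hγ0 hγ1 ?_
  rwa [one_sub_smul_mulVec_inv_mulVec hM hγ0 hγ1, sub_nonneg]

lemma inv_one_sub_smul_nonneg (hM : M ∈ rowStochastic ℝ X) {γ : ℝ} (hγ0 : 0 ≤ γ)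
    (hγ1 : γ < 1) (x y : X) : 0 ≤ (1 - γ • M)⁻¹ x y := by
  simpa using inv_one_sub_smul_mulVec_mono hM hγ0 hγ1
    (f := 0) (f' := Pi.single y 1) (Pi.single_nonneg.2 zero_le_one) x

lemma sum_inv_one_sub_smul (hM : M ∈ rowStochastic ℝ X) {γ : ℝ} (hγ0 : 0 ≤ γ)
    (hγ1 : γ < 1) (x : X) : ∑ y, (1 - γ • M)⁻¹ x y = (1 - γ)⁻¹ := by
  have hB : (1 - γ • M) *ᵥ (1 - γ)⁻¹ • 1 = 1 := by
    rw [one_sub_smul_mulVec, mulVec_smul, one_vecMul_of_mem_rowStochastic hM, smul_smul,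
      ← sub_smul, ← one_sub_mul, mul_inv_cancel₀ (by linarith), one_smul]
  have := congrFun (inv_one_sub_smul_mulVec_mulVec hM hγ0 hγ1 ((1 - γ)⁻¹ • 1)) x
  rw [hB] at this
  simpa [mulVec, dotProduct] using this

lemma sq_inv_one_sub_smul_mulVec_le (hM : M ∈ rowStochastic ℝ X) {γ : ℝ} (hγ0 : 0 ≤ γ)
    (hγ1 : γ < 1) (f : X → ℝ) (x : X) :
    ((1 - γ • M)⁻¹ *ᵥ f) x ^ 2 ≤ (1 - γ)⁻¹ * ((1 - γ • M)⁻¹ *ᵥ f ^ 2) x := by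
  simpa [mulVec, dotProduct, sum_inv_one_sub_smul hM hγ0 hγ1] using
    sq_sum_mul_le (w := (1 - γ • M)⁻¹ x) (f := f) (inv_one_sub_smul_nonneg hM hγ0 hγ1 x)

lemma inv_one_sub_smul_mulVec_variance_le (hM : M ∈ rowStochastic ℝ X) {γ : ℝ} (hγ0 : 0 ≤ γ)
    (hγ1 : γ < 1) {r q : X → ℝ} (hr0 : 0 ≤ r) (hr1 : r ≤ 1) (hq : q = r + γ • M *ᵥ q) {D : ℝ}
    (hD : ∀ i j, q i - q j ≤ D) (x : X) :
    ((1 - γ • M)⁻¹ *ᵥ fun i => γ ^ 2 * ((M *ᵥ q ^ 2) i - (M *ᵥ q) i ^ 2)) x ≤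
      2 * D / (1 - γ) := by
  have : Nonempty X := ⟨x⟩
  obtain ⟨i₀, hi₀⟩ := Finite.exists_min q
  set c := q i₀
  have hq0 : 0 ≤ q := nonneg_of_one_sub_smul_mulVec_nonneg hM hγ0 hγ1 <| by
    rwa [one_sub_smul_mulVec, sub_eq_of_eq_add hq]
  set K := 2 * D / (1 - γ)
  have hK : (1 - γ) * K = 2 * D := mul_div_cancel₀ _ (by linarith)
  set h : X → ℝ := (K - γ * c ^ 2) • 1 + (2 * γ * c) • q - γ • q ^ 2
  have hh : ∀ i, h i = K - γ * (q i - c) ^ 2 := fun i => by simp [h]; ring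
  have hvar : (fun i => γ ^ 2 * ((M *ᵥ q ^ 2) i - (M *ᵥ q) i ^ 2)) ≤ (1 - γ • M) *ᵥ h := by
    intro i
    have hqi : q i = r i + γ * (M *ᵥ q) i := congrFun hq i
    have hri : r i ≤ 1 := hr1 i
    have hc : 0 ≤ c := hq0 i₀
    have ha0 : 0 ≤ q i - c := sub_nonneg.2 (hi₀ i)
    have hb : q i - γ * (M *ᵥ q) i - (1 - γ) * c ≤ 1 := by
      nlinarith [mul_nonneg (sub_nonneg.2 hγ1.le) hc]
    have hkey : γ * (q i - c) ^ 2 - (γ * (M *ᵥ q) i - γ * c) ^ 2 ≤ 2 * D := by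
      nlinarith [hD i i₀, mul_nonneg ha0 (sub_nonneg.2 hb),
        mul_nonneg (sub_nonneg.2 hγ1.le) (sq_nonneg (q i - c)),
        sq_nonneg (q i - γ * (M *ᵥ q) i - (1 - γ) * c)]
    have hBh : ((1 - γ • M) *ᵥ h) i = h i - γ * (K - γ * c ^ 2 + 2 * γ * c * (M *ᵥ q) i -
        γ * (M *ᵥ q ^ 2) i) := by
      simp [h, one_sub_smul_mulVec, mulVec_add, mulVec_sub, mulVec_smul,
        one_vecMul_of_mem_rowStochastic hM]
      ring
    rw [hBh, hh]
    nlinarith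
  calc _ ≤ ((1 - γ • M)⁻¹ *ᵥ ((1 - γ • M) *ᵥ h)) x :=
        inv_one_sub_smul_mulVec_mono hM hγ0 hγ1 hvar x
    _ = h x := by rw [inv_one_sub_smul_mulVec_mulVec hM hγ0 hγ1]
    _ ≤ K := by rw [hh]; nlinarith [sq_nonneg (q x - c)]

end Matrix

section Policy

variable {S A : Type*} [Fintype S] {P : S → A → S → ℝ} {π : S → A}

lemma sub_le_of_policy_bellman (hP0 : ∀ s a s', 0 ≤ P s a s')
    (hP1 : ∀ s a, ∑ s', P s a s' = 1) {r q : S → A → ℝ} (hr0 : ∀ s a, 0 ≤ r s a)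
    (hr1 : ∀ s a, r s a ≤ 1) {γ : ℝ} (hγ0 : 0 ≤ γ) (hγ1 : γ ≤ 1)
    (hq : ∀ s a, q s a = r s a + γ * ∑ s', P s a s' * q s' (π s')) {D : ℝ}
    (hD : ∀ s s', q s (π s) - q s' (π s') ≤ D) (x y : S × A) :
    uncurry q x - uncurry q y ≤ 1 + D := by
  have hPq := sum_mul_sub_sum_mul_le (w := P x.1 x.2) (w' := P y.1 y.2) (hP0 _ _) (hP0 _ _)
    (by rw [hP1, hP1]) hD
  rw [hP1, one_mul] at hPq
  have hD0 : 0 ≤ D := by simpa using hD x.1 x.1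
  simp only [uncurry, hq x.1, hq y.1]
  nlinarith [hr1 x.1 x.2, hr0 y.1 y.2, mul_le_mul_of_nonneg_left hPq hγ0]

variable [Fintype A] [DecidableEq A] {Pmat : Matrix (S × A) (S × A) ℝ}

lemma mulVec_apply_of_policy
    (hPmat : ∀ x y : S × A, Pmat x y = if y.2 = π y.1 then P x.1 x.2 y.1 else 0)
    (f : S × A → ℝ) (x : S × A) : (Pmat *ᵥ f) x = ∑ s', P x.1 x.2 s' * f (s', π s') := by
  simp [mulVec, dotProduct, Fintype.sum_prod_type, hPmat]

lemma mem_rowStochastic_of_policy [DecidableEq S] (hP0 : ∀ s a s', 0 ≤ P s a s')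
    (hP1 : ∀ s a, ∑ s', P s a s' = 1)
    (hPmat : ∀ x y : S × A, Pmat x y = if y.2 = π y.1 then P x.1 x.2 y.1 else 0) :
    Pmat ∈ rowStochastic ℝ (S × A) := by
  refine mem_rowStochastic.2 ⟨fun x y => ?_, funext fun x => ?_⟩
  · rw [hPmat]
    split_ifs
    exacts [hP0 _ _ _, le_rfl]
  · simp [mulVec_apply_of_policy hPmat, hP1]

lemma sq_eq_variance_of_policy (hP0 : ∀ s a s', 0 ≤ P s a s') (hP1 : ∀ s a, ∑ s', P s a s' = 1)
    (hPmat : ∀ x y : S × A, Pmat x y = if y.2 = π y.1 then P x.1 x.2 y.1 else 0) {γ : ℝ}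
    {q : S → A → ℝ} {σ : S × A → ℝ}
    (hσ : ∀ x : S × A, σ x = √(γ ^ 2 * (∑ s', P x.1 x.2 s' * q s' (π s') ^ 2 -
      (∑ s', P x.1 x.2 s' * q s' (π s')) ^ 2))) :
    σ ^ 2 = fun x => γ ^ 2 * ((Pmat *ᵥ uncurry q ^ 2) x - (Pmat *ᵥ uncurry q) x ^ 2) := by
  funext x
  have hjensen := sq_sum_mul_le (w := P x.1 x.2) (f := fun s => q s (π s)) (hP0 x.1 x.2)
  rw [hP1, one_mul] at hjensen
  simp only [Pi.pow_apply, hσ x, mulVec_apply_of_policy hPmat, uncurry_apply_pair]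
  exact Real.sq_sqrt (mul_nonneg (sq_nonneg γ) (sub_nonneg.2 hjensen))

end Policy

theorem inv_sigma_norm_le_general
    {S A : Type*} [Fintype S] [DecidableEq S]
    [Fintype A] [DecidableEq A]
    -- the MDP data
    (r : S → A → ℝ) (hr0 : ∀ s a, 0 ≤ r s a) (hr1 : ∀ s a, r s a ≤ 1)
    (P : S → A → S → ℝ) (hP0 : ∀ s a s', 0 ≤ P s a s') (hP1 : ∀ s a, ∑ s', P s a s' = 1)
    (γ : ℝ) (hγ0 : 0 < γ) (hγ1 : γ < 1)
    -- the policy and its q-function (characterized by its Bellman equation)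
    (π : S → A)
    (q : S → A → ℝ) (hq : ∀ s a, q s a = r s a + γ * ∑ s', P s a s' * q s' (π s'))
    -- the (m,p)-Doeblin condition for the induced kernel P_π, with m/p ≤ 1/(1-γ)
    (m : ℕ) (p : ℝ) (hm : 0 < m) (hp0 : 0 < p) (hp1 : p ≤ 1)
    (ψ : S → ℝ) (hψ1 : ∑ s', ψ s' = 1)
    (hdoeb : ∀ s s', p * ψ s' ≤ ((Matrix.of fun u u' => P u (π u) u') ^ m) s s')
    -- the operator P^π on ℝ^{S×A} and the standard-deviation vector σ^π
    (Pmat : Matrix (S × A) (S × A) ℝ)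
    (hPmat : ∀ x y : S × A, Pmat x y = if y.2 = π y.1 then P x.1 x.2 y.1 else 0)
    (σ : S × A → ℝ)
    (hσ : ∀ x : S × A, σ x =
      Real.sqrt (γ ^ 2 * (∑ s', P x.1 x.2 s' * (q s' (π s')) ^ 2 -
        (∑ s', P x.1 x.2 s' * q s' (π s')) ^ 2))) :
    (⨆ x : S × A, |((1 - γ • Pmat)⁻¹.mulVec σ) x|) ≤
      80 * Real.sqrt ((m : ℝ) / p) / (1 - γ) := by
  have hQ : (Matrix.of fun u u' => P u (π u) u') ∈ rowStochastic ℝ S :=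
    mem_rowStochastic_iff_sum.2 ⟨fun _ _ => hP0 _ _ _, fun _ => hP1 _ _⟩
  have hPm := mem_rowStochastic_of_policy hP0 hP1 hPmat
  have hspan : ∀ s s', q s (π s) - q s' (π s') ≤ m / p := by
    simpa using sub_le_of_eq_add_smul_mulVec_of_doeblin hQ hp0 hp1 hψ1 hdoeb hγ0.le hγ1.le
      (G := 1) (fun s s' => by linarith [hr0 s' (π s'), hr1 s (π s)])
      (funext fun s => hq s (π s))
  have hqX : uncurry q = uncurry r + γ • Pmat *ᵥ uncurry q := funext fun ⟨s, a⟩ => by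
    simp [mulVec_apply_of_policy hPmat, hq s a]
  have hmp : 1 ≤ (m : ℝ) / p := by
    rw [le_div_iff₀ hp0, one_mul]
    exact hp1.trans (Nat.one_le_cast.2 hm)
  refine Real.iSup_le (fun x => abs_le_of_sq_le_sq ?_ (by positivity)) (by positivity)
  calc ((1 - γ • Pmat)⁻¹ *ᵥ σ) x ^ 2 ≤ (1 - γ)⁻¹ * ((1 - γ • Pmat)⁻¹ *ᵥ σ ^ 2) x :=
        sq_inv_one_sub_smul_mulVec_le hPm hγ0.le hγ1 σ x
    _ ≤ (1 - γ)⁻¹ * (2 * (1 + m / p) / (1 - γ)) := by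
        gcongr
        rw [sq_eq_variance_of_policy hP0 hP1 hPmat hσ]
        exact inv_one_sub_smul_mulVec_variance_le hPm hγ0.le hγ1 (fun x => hr0 x.1 x.2)
          (fun x => hr1 x.1 x.2) hqX
          (sub_le_of_policy_bellman hP0 hP1 hr0 hr1 hγ0.le hγ1.le hq hspan) x
    _ ≤ (80 * √((m : ℝ) / p) / (1 - γ)) ^ 2 := by
        rw [div_pow, mul_pow, Real.sq_sqrt (by positivity), inv_mul_eq_div, div_div, ← sq]
        gcongr ?_ / _
        linarith

/-- `‖(I − γP^π)⁻¹ σ^π‖_∞ ≤ 80 √(m/p)/(1−γ)` when the kernel induced by `π`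
is `(m,p)`-Doeblin with `m/p ≤ 1/(1−γ)`. -/
theorem inv_sigma_norm_le
    {S A : Type*} [Fintype S] [Nonempty S] [DecidableEq S]
    [Fintype A] [Nonempty A] [DecidableEq A]
    -- the MDP data
    (r : S → A → ℝ) (hr0 : ∀ s a, 0 ≤ r s a) (hr1 : ∀ s a, r s a ≤ 1)
    (P : S → A → S → ℝ) (hP0 : ∀ s a s', 0 ≤ P s a s') (hP1 : ∀ s a, ∑ s', P s a s' = 1)
    (γ : ℝ) (hγ0 : 0 < γ) (hγ1 : γ < 1)
    -- the policy and its q-function (characterized by its Bellman equation)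
    (π : S → A)
    (q : S → A → ℝ) (hq : ∀ s a, q s a = r s a + γ * ∑ s', P s a s' * q s' (π s'))
    -- the (m,p)-Doeblin condition for the induced kernel P_π, with m/p ≤ 1/(1-γ)
    (m : ℕ) (p : ℝ) (hm : 0 < m) (hp0 : 0 < p) (hp1 : p ≤ 1)
    (ψ : S → ℝ) (hψ0 : ∀ s', 0 ≤ ψ s') (hψ1 : ∑ s', ψ s' = 1)
    (hdoeb : ∀ s s', p * ψ s' ≤ ((Matrix.of fun u u' => P u (π u) u') ^ m) s s')
    (hmp : (m : ℝ) / p ≤ 1 / (1 - γ))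
    -- the operator P^π on ℝ^{S×A} and the standard-deviation vector σ^π
    (Pmat : Matrix (S × A) (S × A) ℝ)
    (hPmat : ∀ x y : S × A, Pmat x y = if y.2 = π y.1 then P x.1 x.2 y.1 else 0)
    (σ : S × A → ℝ)
    (hσ : ∀ x : S × A, σ x =
      Real.sqrt (γ ^ 2 * (∑ s', P x.1 x.2 s' * (q s' (π s')) ^ 2 -
        (∑ s', P x.1 x.2 s' * q s' (π s')) ^ 2))) :
    (⨆ x : S × A, |((1 - γ • Pmat)⁻¹.mulVec σ) x|) ≤
      80 * Real.sqrt ((m : ℝ) / p) / (1 - γ) :=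
  inv_sigma_norm_le_general r hr0 hr1 P hP0 hP1 γ hγ0 hγ1 π q hq m p hm hp0 hp1 ψ hψ1 hdoeb Pmat
    hPmat σ hσ
end

section
/- Let M = (S, A, r, P, γ) be a finite discounted MDP and π : S → A any policy. Then the variance of the discounted cumulative reward satisfies the Bellman-type identity Ψ^π(s,a) = σ^π(s,a)² + γ² Σ_{s'} P_{s,a}(s') Ψ^π(s', π(s')) for all (s,a) ∈ S × A, i.e., Ψ^π = (σ^π)² + γ² P^π Ψ^π. -/
/-!
Along every path the return `G = ∑ γᵏ c(Sₖ)` satisfies `G = c(S₀) + γ · G ∘ shift`, and under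
`μ s a` the start `S₀ = s` is almost sure, so `Var G = γ² Var (G ∘ shift)`. The finite-dimensional
distributions show that the shifted path is distributed as the mixture `∑ P s a s' • μ s' (π s')`,
and the law of total variance for this mixture yields the identity, once the means
`∫ G ∂μ s' (π s')` are identified with `q s' (π s')`: both solve the same `γ`-contracting
Bellman equation, whose solution is unique.
-/

open MeasureTheory ProbabilityTheory Finset

namespace VarianceBellman

section Mixture

variable {Ω ι : Type*} [MeasurableSpace Ω] [Fintype ι] {p : ι → ℝ} {ν : ι → Measure Ω}

lemma isProbabilityMeasure_mixture (hp0 : ∀ i, 0 ≤ p i) (hp1 : ∑ i, p i = 1)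
    [∀ i, IsProbabilityMeasure (ν i)] :
    IsProbabilityMeasure (∑ i, ENNReal.ofReal (p i) • ν i) := by
  constructor
  simp [Measure.finsetSum_apply, ← ENNReal.ofReal_sum_of_nonneg fun i _ => hp0 i, hp1]

lemma integral_mixture (hp0 : ∀ i, 0 ≤ p i) {X : Ω → ℝ} (hX : ∀ i, Integrable X (ν i)) :
    ∫ ω, X ω ∂(∑ i, ENNReal.ofReal (p i) • ν i) = ∑ i, p i * ∫ ω, X ω ∂(ν i) := by
  rw [integral_finsetSum_measure fun i _ => (hX i).smul_measure ENNReal.ofReal_ne_top]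
  simp [integral_smul_measure, ENNReal.toReal_ofReal (hp0 _)]

lemma variance_mixture (hp0 : ∀ i, 0 ≤ p i) (hp1 : ∑ i, p i = 1)
    [∀ i, IsProbabilityMeasure (ν i)] {X : Ω → ℝ} (hXm : Measurable X)
    (hX : ∀ i, MemLp X 2 (ν i)) :
    Var[X; ∑ i, ENNReal.ofReal (p i) • ν i] =
      ∑ i, p i * Var[X; ν i] +
        (∑ i, p i * (∫ ω, X ω ∂(ν i)) ^ 2 - (∑ i, p i * ∫ ω, X ω ∂(ν i)) ^ 2) := by
  have := isProbabilityMeasure_mixture hp0 hp1 (ν := ν)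
  have hsq : ∀ i, Integrable (fun ω => X ω ^ 2) (ν i) := fun i => (hX i).integrable_sq
  have hmix : MemLp X 2 (∑ i, ENNReal.ofReal (p i) • ν i) :=
    (memLp_two_iff_integrable_sq hXm.aestronglyMeasurable).2 <|
      integrable_finsetSum_measure.2 fun i _ => (hsq i).smul_measure ENNReal.ofReal_ne_top
  rw [variance_eq_sub hmix]
  simp only [Pi.pow_apply, variance_eq_sub (hX _)]
  rw [integral_mixture hp0 hsq, integral_mixture hp0 fun i => (hX i).integrable one_le_two]
  simp only [mul_sub, sum_sub_distrib]
  ring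

end Mixture

lemma eq_of_bellman_eq {S : Type*} [Fintype S] {K : S → S → ℝ} (hK0 : ∀ s s', 0 ≤ K s s')
    (hK1 : ∀ s, ∑ s', K s s' = 1) {γ : ℝ} (hγ0 : 0 ≤ γ) (hγ1 : γ < 1) {c f g : S → ℝ}
    (hf : ∀ s, f s = c s + γ * ∑ s', K s s' * f s')
    (hg : ∀ s, g s = c s + γ * ∑ s', K s s' * g s') : f = g := by
  funext s
  have : Nonempty S := ⟨s⟩
  obtain ⟨t, ht⟩ := Finite.exists_max fun x => |f x - g x|
  have hdiff : ∀ x, f x - g x = γ * ∑ y, K x y * (f y - g y) := fun x => by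
    rw [hf x, hg x]
    simp only [mul_sub, sum_sub_distrib]
    ring
  have hcontract : |f t - g t| ≤ γ * |f t - g t| := calc
    |f t - g t| = γ * |∑ y, K t y * (f y - g y)| := by rw [hdiff, abs_mul, abs_of_nonneg hγ0]
    _ ≤ γ * ∑ y, K t y * |f t - g t| := by
      gcongr
      refine (abs_sum_le_sum_abs _ _).trans (sum_le_sum fun y _ => ?_)
      rw [abs_mul, abs_of_nonneg (hK0 t y)]
      exact mul_le_mul_of_nonneg_left (ht y) (hK0 t y)
    _ = γ * |f t - g t| := by rw [← sum_mul, hK1, one_mul]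
  have hmax : |f t - g t| = 0 := by nlinarith [abs_nonneg (f t - g t)]
  exact sub_eq_zero.1 (abs_nonpos_iff.1 (hmax ▸ ht s))

section Cylinders

open Preorder

variable {S : Type*}

def cylinder (n : ℕ) (w : ℕ → S) : Set (ℕ → S) := {ω | ∀ i ≤ n, ω i = w i}

lemma cylinder_eq_preimage_frestrictLe (n : ℕ) (w : ℕ → S) :
    cylinder n w = frestrictLe (π := fun _ => S) n ⁻¹' {frestrictLe n w} := by
  ext ω
  simp [cylinder, funext_iff]

lemma measurableSet_cylinder [MeasurableSpace S] [MeasurableSingletonClass S] (n : ℕ)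
    (w : ℕ → S) : MeasurableSet (cylinder n w) := by
  rw [cylinder_eq_preimage_frestrictLe]
  exact measurable_frestrictLe n (measurableSet_singleton _)

lemma cylinder_inter_eq_right {n m : ℕ} (hnm : n ≤ m) {w u : ℕ → S}
    (h : (cylinder n w ∩ cylinder m u).Nonempty) : cylinder n w ∩ cylinder m u = cylinder m u := by
  obtain ⟨ω, hw, hu⟩ := h
  refine Set.inter_eq_self_of_subset_right fun x hx i hi => ?_
  rw [hx i (hi.trans hnm), ← hu i (hi.trans hnm), ← hw i hi]

variable (S) in
def cylinders : Set (Set (ℕ → S)) := {t | ∃ n, 1 ≤ n ∧ ∃ w, t = cylinder n w}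

lemma isPiSystem_cylinders : IsPiSystem (cylinders S) := by
  rintro _ ⟨n, hn, w, rfl⟩ _ ⟨m, hm, u, rfl⟩ hne
  rcases le_total n m with h | h
  · exact ⟨m, hm, u, cylinder_inter_eq_right h hne⟩
  · rw [Set.inter_comm] at hne ⊢
    exact ⟨n, hn, w, cylinder_inter_eq_right h hne⟩

def shift (ω : ℕ → S) : ℕ → S := fun k => ω (k + 1)

def cons (x : S) (w : ℕ → S) : ℕ → S
  | 0 => x
  | k + 1 => w k

lemma preimage_shift_cylinder_inter (n : ℕ) (w : ℕ → S) (x : S) :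
    shift ⁻¹' cylinder n w ∩ {ω | ω 0 = x} = cylinder (n + 1) (cons x w) := by
  ext ω
  refine ⟨fun ⟨hw, hx⟩ i hi => ?_, fun h => ⟨fun i hi => h (i + 1) (by omega), h 0 (by omega)⟩⟩
  cases i with
  | zero => exact hx
  | succ i => exact hw i (by omega)

variable [MeasurableSpace S]

lemma generateFrom_cylinders [Countable S] [MeasurableSingletonClass S] :
    MeasurableSpace.generateFrom (cylinders S) = MeasurableSpace.pi := by
  set m := MeasurableSpace.generateFrom (cylinders S)
  refine le_antisymm (MeasurableSpace.generateFrom_le ?_) (iSup_le fun i => ?_)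
  · rintro _ ⟨n, -, w, rfl⟩
    exact measurableSet_cylinder n w
  -- every fibre of `frestrictLe n` is either empty or a cylinder
  have hrestrict (n : ℕ) (hn : 1 ≤ n) : Measurable[m] (frestrictLe (π := fun _ => S) n) := by
    refine measurable_to_countable' fun v => ?_
    rcases (frestrictLe (π := fun _ => S) n ⁻¹' {v}).eq_empty_or_nonempty with h | ⟨ω, hω⟩
    · exact h ▸ @MeasurableSet.empty _ m
    · rw [Set.mem_preimage, Set.mem_singleton_iff] at hω
      rw [← hω, ← cylinder_eq_preimage_frestrictLe]
      exact MeasurableSpace.measurableSet_generateFrom ⟨n, hn, ω, rfl⟩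
  exact ((measurable_pi_apply (⟨i, by simp⟩ : Finset.Iic (i + 1))).comp
    (hrestrict (i + 1) le_add_self)).comap_le

lemma ext_of_cylinder [Countable S] [MeasurableSingletonClass S] {μ ν : Measure (ℕ → S)}
    [IsProbabilityMeasure μ] [IsProbabilityMeasure ν]
    (h : ∀ n, 1 ≤ n → ∀ w, μ (cylinder n w) = ν (cylinder n w)) : μ = ν :=
  ext_of_generate_finite (cylinders S) generateFrom_cylinders.symm isPiSystem_cylinders
    (by rintro _ ⟨n, hn, w, rfl⟩; exact h n hn w) (by simp)

lemma measurable_shift : Measurable (shift (S := S)) :=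
  measurable_pi_lambda _ fun k => measurable_pi_apply (k + 1)

end Cylinders

section DiscountedReturn

variable {S : Type*} {γ C : ℝ} {c : S → ℝ}

noncomputable def discountedReturn (γ : ℝ) (c : S → ℝ) (ω : ℕ → S) : ℝ := ∑' k, γ ^ k * c (ω k)

lemma norm_discountedReturn_term_le (hγ0 : 0 ≤ γ) (hc : ∀ x, |c x| ≤ C) (ω : ℕ → S) (k : ℕ) :
    ‖γ ^ k * c (ω k)‖ ≤ γ ^ k * C := by
  rw [Real.norm_eq_abs, abs_mul, abs_pow, abs_of_nonneg hγ0]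
  exact mul_le_mul_of_nonneg_left (hc _) (pow_nonneg hγ0 k)

lemma summable_discountedReturn (hγ0 : 0 ≤ γ) (hγ1 : γ < 1) (hc : ∀ x, |c x| ≤ C) (ω : ℕ → S) :
    Summable fun k => γ ^ k * c (ω k) :=
  .of_norm_bounded ((summable_geometric_of_lt_one hγ0 hγ1).mul_right C)
    (norm_discountedReturn_term_le hγ0 hc ω)

lemma abs_discountedReturn_le (hγ0 : 0 ≤ γ) (hγ1 : γ < 1) (hc : ∀ x, |c x| ≤ C)
    (ω : ℕ → S) : |discountedReturn γ c ω| ≤ (1 - γ)⁻¹ * C :=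
  tsum_of_norm_bounded ((hasSum_geometric_of_lt_one hγ0 hγ1).mul_right C)
    (norm_discountedReturn_term_le hγ0 hc ω)

lemma discountedReturn_eq_add_shift (hγ0 : 0 ≤ γ) (hγ1 : γ < 1) (hc : ∀ x, |c x| ≤ C)
    (ω : ℕ → S) :
    discountedReturn γ c ω = c (ω 0) + γ * discountedReturn γ c (shift ω) := by
  rw [discountedReturn, (summable_discountedReturn hγ0 hγ1 hc ω).tsum_eq_zero_add, discountedReturn,
    ← tsum_mul_left]
  simp only [pow_succ, shift]
  congr 1
  · simp
  · exact tsum_congr fun k => by ring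

variable [MeasurableSpace S]

lemma measurable_discountedReturn (hγ0 : 0 ≤ γ) (hγ1 : γ < 1) (hc : ∀ x, |c x| ≤ C)
    (hcm : Measurable c) : Measurable (discountedReturn γ c) :=
  measurable_of_tendsto_metrizable
    (fun _ => Finset.measurable_sum _ fun k _ =>
      measurable_const.mul (hcm.comp (measurable_pi_apply k)))
    (tendsto_pi_nhds.2 fun ω => (summable_discountedReturn hγ0 hγ1 hc ω).hasSum.tendsto_sum_nat)

lemma memLp_discountedReturn (hγ0 : 0 ≤ γ) (hγ1 : γ < 1) (hc : ∀ x, |c x| ≤ C)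
    (hcm : Measurable c) (p : ENNReal) (μ : Measure (ℕ → S)) [IsFiniteMeasure μ] :
    MemLp (discountedReturn γ c) p μ :=
  .of_bound (measurable_discountedReturn hγ0 hγ1 hc hcm).aestronglyMeasurable _
    (.of_forall (abs_discountedReturn_le hγ0 hγ1 hc))

end DiscountedReturn

section PathMeasure

variable {S A : Type*} [MeasurableSpace S] [DecidableEq S]
  {P : S → A → S → ℝ} {π : S → A} {μ : S → A → Measure (ℕ → S)}

def IsPathMeasure (P : S → A → S → ℝ) (π : S → A) (μ : S → A → Measure (ℕ → S)) : Prop :=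
  ∀ s a (n : ℕ), 1 ≤ n → ∀ w : ℕ → S,
    μ s a (cylinder n w) =
      ENNReal.ofReal ((if w 0 = s then (1 : ℝ) else 0) * P s a (w 1) *
        ∏ k ∈ Ico 1 n, P (w k) (π (w k)) (w (k + 1)))

namespace IsPathMeasure

lemma ae_apply_zero_eq [Countable S] (hμ : IsPathMeasure P π μ) (s : S) (a : A) :
    ∀ᵐ ω ∂μ s a, ω 0 = s := by
  rw [ae_iff]
  refine measure_mono_null (t := ⋃ (x : S) (y : S) (_ : x ≠ s), cylinder 1 (cons x fun _ => y))
    (fun ω hω => ?_) (measure_iUnion_null fun x => measure_iUnion_null fun y =>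
      measure_iUnion_null fun hx => by simp [hμ s a 1 le_rfl, cons, hx])
  simp only [Set.mem_iUnion]
  refine ⟨ω 0, ω 1, hω, fun i hi => ?_⟩
  interval_cases i <;> rfl

variable {γ C : ℝ} {c : S → ℝ}

lemma discountedReturn_ae_eq [Countable S] (hμ : IsPathMeasure P π μ) (hγ0 : 0 ≤ γ) (hγ1 : γ < 1)
    (hc : ∀ x, |c x| ≤ C) (s : S) (a : A) :
    discountedReturn γ c =ᵐ[μ s a] fun ω => c s + γ * discountedReturn γ c (shift ω) := by
  filter_upwards [ae_apply_zero_eq hμ s a] with ω hω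
  rw [discountedReturn_eq_add_shift hγ0 hγ1 hc, hω]

variable [Fintype S] [MeasurableSingletonClass S] [∀ s a, IsProbabilityMeasure (μ s a)]

lemma map_shift (hμ : IsPathMeasure P π μ) (hP0 : ∀ s a s', 0 ≤ P s a s')
    (hP1 : ∀ s a, ∑ s', P s a s' = 1) (s : S) (a : A) :
    (μ s a).map shift = ∑ s', ENNReal.ofReal (P s a s') • μ s' (π s') := by
  have := isProbabilityMeasure_mixture (hP0 s a) (hP1 s a) (ν := fun s' => μ s' (π s'))
  have := Measure.isProbabilityMeasure_map (μ := μ s a) measurable_shift.aemeasurable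
  refine ext_of_cylinder fun n hn w => ?_
  have hpath : ∏ k ∈ Ico 1 (n + 1), P (cons s w k) (π (cons s w k)) (cons s w (k + 1)) =
      P (w 0) (π (w 0)) (w 1) * ∏ k ∈ Ico 1 n, P (w k) (π (w k)) (w (k + 1)) := by
    rw [← prod_Ico_add' _ 0 n 1, Nat.Ico_zero_eq_range, prod_range_eq_mul_Ico _ hn]
    rfl
  rw [Measure.map_apply measurable_shift (measurableSet_cylinder n w),
    ← measure_inter_conull (ae_apply_zero_eq hμ s a), preimage_shift_cylinder_inter,
    hμ s a (n + 1) (by omega), hpath, Measure.finsetSum_apply, sum_eq_single (w 0)]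
  · rw [Measure.smul_apply, hμ _ _ n hn, smul_eq_mul, ← ENNReal.ofReal_mul (hP0 _ _ _)]
    simp [cons]
  · intro x _ hx
    simp [hμ _ _ n hn, Ne.symm hx]
  · simp

lemma integral_discountedReturn (hμ : IsPathMeasure P π μ) (hP0 : ∀ s a s', 0 ≤ P s a s')
    (hP1 : ∀ s a, ∑ s', P s a s' = 1) (hγ0 : 0 ≤ γ) (hγ1 : γ < 1) (hc : ∀ x, |c x| ≤ C)
    (hcm : Measurable c) (s : S) (a : A) :
    ∫ ω, discountedReturn γ c ω ∂μ s a =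
      c s + γ * ∑ s', P s a s' * ∫ ω, discountedReturn γ c ω ∂μ s' (π s') := by
  have hG := measurable_discountedReturn hγ0 hγ1 hc hcm
  have hint (ν : Measure (ℕ → S)) [IsFiniteMeasure ν] : Integrable (discountedReturn γ c) ν :=
    (memLp_discountedReturn hγ0 hγ1 hc hcm 1 ν).integrable le_rfl
  have := Measure.isProbabilityMeasure_map (μ := μ s a) measurable_shift.aemeasurable
  have hshift : Integrable (fun ω => discountedReturn γ c (shift ω)) (μ s a) :=
    (hint _).comp_measurable measurable_shift
  rw [integral_congr_ae (discountedReturn_ae_eq hμ hγ0 hγ1 hc s a),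
    integral_add (integrable_const _) (hshift.const_mul γ),
    integral_const_mul, ← integral_map measurable_shift.aemeasurable hG.aestronglyMeasurable,
    map_shift hμ hP0 hP1, integral_mixture (hP0 s a) fun _ => hint _]
  simp

lemma variance_discountedReturn (hμ : IsPathMeasure P π μ) (hP0 : ∀ s a s', 0 ≤ P s a s')
    (hP1 : ∀ s a, ∑ s', P s a s' = 1) (hγ0 : 0 ≤ γ) (hγ1 : γ < 1) (hc : ∀ x, |c x| ≤ C)
    (hcm : Measurable c) (s : S) (a : A) :
    Var[discountedReturn γ c; μ s a] =
      γ ^ 2 * (∑ s', P s a s' * Var[discountedReturn γ c; μ s' (π s')] +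
        (∑ s', P s a s' * (∫ ω, discountedReturn γ c ω ∂μ s' (π s')) ^ 2 -
          (∑ s', P s a s' * ∫ ω, discountedReturn γ c ω ∂μ s' (π s')) ^ 2)) := by
  have hG := measurable_discountedReturn hγ0 hγ1 hc hcm
  have hshift : MeasurePreserving shift (μ s a) (∑ s', ENNReal.ofReal (P s a s') • μ s' (π s')) :=
    ⟨measurable_shift, map_shift hμ hP0 hP1 s a⟩
  rw [variance_congr (discountedReturn_ae_eq hμ hγ0 hγ1 hc s a),
    variance_const_add (X := fun ω => γ * discountedReturn γ c (shift ω))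
      ((hG.comp measurable_shift).const_mul γ).aestronglyMeasurable,
    variance_const_mul, hshift.variance_fun_comp hG.aemeasurable,
    variance_mixture (hP0 s a) (hP1 s a) hG fun _ => memLp_discountedReturn hγ0 hγ1 hc hcm 2 _]

end IsPathMeasure

end PathMeasure

end VarianceBellman

open VarianceBellman

theorem variance_bellman_identity_general
    {S A : Type*} [Fintype S] [DecidableEq S]
    [MeasurableSpace S] [MeasurableSingletonClass S]
    -- the MDP data
    (r : S → A → ℝ) (hr0 : ∀ s a, 0 ≤ r s a) (hr1 : ∀ s a, r s a ≤ 1)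
    (P : S → A → S → ℝ) (hP0 : ∀ s a s', 0 ≤ P s a s') (hP1 : ∀ s a, ∑ s', P s a s' = 1)
    (γ : ℝ) (hγ0 : 0 < γ) (hγ1 : γ < 1)
    -- the policy and its q-function (characterized by its Bellman equation)
    (π : S → A)
    (q : S → A → ℝ) (hq : ∀ s a, q s a = r s a + γ * ∑ s', P s a s' * q s' (π s'))
    -- the path measures of the Markov chain started from (s,a)
    (μ : S → A → Measure (ℕ → S)) (hμ : ∀ s a, IsProbabilityMeasure (μ s a))
    (hfdd : ∀ s a (n : ℕ), 1 ≤ n → ∀ w : ℕ → S,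
      μ s a {ω | ∀ i ≤ n, ω i = w i} =
        ENNReal.ofReal ((if w 0 = s then (1 : ℝ) else 0) * P s a (w 1) *
          ∏ k ∈ Finset.Ico 1 n, P (w k) (π (w k)) (w (k + 1)))) :
    ∀ s a,
      variance (fun ω => ∑' k : ℕ, γ ^ k * r (ω k) (π (ω k))) (μ s a) =
        γ ^ 2 * (∑ s', P s a s' * (q s' (π s')) ^ 2 -
            (∑ s', P s a s' * q s' (π s')) ^ 2) +
        γ ^ 2 * ∑ s', P s a s' *
          variance (fun ω => ∑' k : ℕ, γ ^ k * r (ω k) (π (ω k))) (μ s' (π s')) := by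
  intro s a
  let c : S → ℝ := fun x => r x (π x)
  have hc : ∀ x, |c x| ≤ 1 := fun x => abs_le.2 ⟨by linarith [hr0 x (π x)], hr1 x (π x)⟩
  have hcm : Measurable c := measurable_of_countable c
  have hpath : IsPathMeasure P π μ := hfdd
  -- the expected return from `s'` under `π` solves the same Bellman equation as `q s' (π s')`
  have hmean : (fun s' => ∫ ω, discountedReturn γ c ω ∂μ s' (π s')) = fun s' => q s' (π s') :=
    eq_of_bellman_eq (fun x => hP0 x (π x)) (fun x => hP1 x (π x)) hγ0.le hγ1
      (fun s' => hpath.integral_discountedReturn hP0 hP1 hγ0.le hγ1 hc hcm s' (π s'))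
      (fun s' => hq s' (π s'))
  have hreturn : (fun ω : ℕ → S => ∑' k, γ ^ k * r (ω k) (π (ω k))) = discountedReturn γ c := rfl
  rw [hreturn, hpath.variance_discountedReturn hP0 hP1 hγ0.le hγ1 hc hcm s a]
  simp only [congrFun hmean]
  ring

/-- Bellman-type identity for the variance of the discounted cumulative reward:
`Ψ^π = (σ^π)² + γ² P^π Ψ^π`.

The Markov chain started from `(s,a)` (i.e. `S₀ = s`, `S₁ ∼ P_{s,a}`, and
`S_{k+1} ∼ P_π(S_k,·)` for `k ≥ 1`) is encoded by its path measure `μ s a` on `ℕ → S`,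
characterized through its finite-dimensional cylinder probabilities, and
`Ψ^π(s,a)` is the variance of `Σ_k γ^k r(S_k, π(S_k))` under `μ s a`. -/
theorem variance_bellman_identity
    {S A : Type*} [Fintype S] [Nonempty S] [DecidableEq S] [Fintype A] [Nonempty A]
    [MeasurableSpace S] [MeasurableSingletonClass S]
    -- the MDP data
    (r : S → A → ℝ) (hr0 : ∀ s a, 0 ≤ r s a) (hr1 : ∀ s a, r s a ≤ 1)
    (P : S → A → S → ℝ) (hP0 : ∀ s a s', 0 ≤ P s a s') (hP1 : ∀ s a, ∑ s', P s a s' = 1)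
    (γ : ℝ) (hγ0 : 0 < γ) (hγ1 : γ < 1)
    -- the policy and its q-function (characterized by its Bellman equation)
    (π : S → A)
    (q : S → A → ℝ) (hq : ∀ s a, q s a = r s a + γ * ∑ s', P s a s' * q s' (π s'))
    -- the path measures of the Markov chain started from (s,a)
    (μ : S → A → Measure (ℕ → S)) (hμ : ∀ s a, IsProbabilityMeasure (μ s a))
    (hfdd : ∀ s a (n : ℕ), 1 ≤ n → ∀ w : ℕ → S,
      μ s a {ω | ∀ i ≤ n, ω i = w i} =
        ENNReal.ofReal ((if w 0 = s then (1 : ℝ) else 0) * P s a (w 1) *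
          ∏ k ∈ Finset.Ico 1 n, P (w k) (π (w k)) (w (k + 1)))) :
    ∀ s a,
      variance (fun ω => ∑' k : ℕ, γ ^ k * r (ω k) (π (ω k))) (μ s a) =
        γ ^ 2 * (∑ s', P s a s' * (q s' (π s')) ^ 2 -
            (∑ s', P s a s' * q s' (π s')) ^ 2) +
        γ ^ 2 * ∑ s', P s a s' *
          variance (fun ω => ∑' k : ℕ, γ ^ k * r (ω k) (π (ω k))) (μ s' (π s')) :=
  variance_bellman_identity_general r hr0 hr1 P hP0 hP1 γ hγ0 hγ1 π q hq μ hμ hfdd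
end

section
/- Let M = (S, A, r, P, γ) be a finite discounted MDP and suppose there exists an optimal policy π* such that the induced kernel P_{π*} satisfies the (m,p)-Doeblin condition. Then the one-sample Bellman variance at the optimal q-function satisfies σ(q*)(s,a)² ≤ 4 γ² (m/p)² for every (s,a) ∈ S × A. -/
open Finset

section Helpers
variable {S : Type*} [Fintype S] [Nonempty S] [DecidableEq S]

/-- convex combination lies below the max -/
private lemma stoch_le_sup (Q : S → ℝ) (hQ0 : ∀ s', 0 ≤ Q s') (hQ1 : ∑ s', Q s' = 1)
    (f : S → ℝ) : ∑ s', Q s' * f s' ≤ univ.sup' univ_nonempty f := by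
  calc ∑ s', Q s' * f s' ≤ ∑ s', Q s' * univ.sup' univ_nonempty f :=
        Finset.sum_le_sum fun i _ =>
          mul_le_mul_of_nonneg_left (le_sup' f (mem_univ i)) (hQ0 i)
    _ = univ.sup' univ_nonempty f := by rw [← Finset.sum_mul, hQ1, one_mul]

private lemma inf_le_stoch (Q : S → ℝ) (hQ0 : ∀ s', 0 ≤ Q s') (hQ1 : ∑ s', Q s' = 1)
    (f : S → ℝ) : univ.inf' univ_nonempty f ≤ ∑ s', Q s' * f s' := by
  calc univ.inf' univ_nonempty f = ∑ s', Q s' * univ.inf' univ_nonempty f := by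
        rw [← Finset.sum_mul, hQ1, one_mul]
    _ ≤ ∑ s', Q s' * f s' :=
        Finset.sum_le_sum fun i _ =>
          mul_le_mul_of_nonneg_left (inf'_le f (mem_univ i)) (hQ0 i)

/-- powers of a row-stochastic matrix are row-stochastic -/
private lemma pow_stoch (Q : Matrix S S ℝ) (hQ0 : ∀ s s', 0 ≤ Q s s')
    (hQ1 : ∀ s, ∑ s', Q s s' = 1) (k : ℕ) :
    (∀ s s', 0 ≤ (Q ^ k) s s') ∧ (∀ s, ∑ s', (Q ^ k) s s' = 1) := by
  induction k with
  | zero =>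
    constructor
    · intro s s'
      simp [Matrix.one_apply]
      split <;> norm_num
    · intro s
      simp [Matrix.one_apply]
  | succ k ih =>
    constructor
    · intro s s'
      rw [pow_succ, Matrix.mul_apply]
      exact Finset.sum_nonneg fun j _ => mul_nonneg (ih.1 s j) (hQ0 j s')
    · intro s
      rw [pow_succ]
      simp only [Matrix.mul_apply]
      rw [Finset.sum_comm]
      calc ∑ j, ∑ s', (Q ^ k) s j * Q j s' = ∑ j, (Q ^ k) s j * ∑ s', Q j s' := by
            simp [Finset.mul_sum]
        _ = 1 := by simp [hQ1, ih.2 s]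

/-- Doeblin span contraction -/
private lemma doeblin_span (Q : Matrix S S ℝ) (hQ0 : ∀ s s', 0 ≤ Q s s')
    (hQ1 : ∀ s, ∑ s', Q s s' = 1) (p : ℝ) (hp1 : p ≤ 1)
    (ψ : S → ℝ) (hψ1 : ∑ s', ψ s' = 1) (hd : ∀ s s', p * ψ s' ≤ Q s s') (f : S → ℝ) :
    univ.sup' univ_nonempty (Q.mulVec f) - univ.inf' univ_nonempty (Q.mulVec f) ≤
      (1 - p) * (univ.sup' univ_nonempty f - univ.inf' univ_nonempty f) := by
  set c : ℝ := ∑ s', ψ s' * f s' with hc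
  have key : ∀ s, Q.mulVec f s = (∑ s', (Q s s' - p * ψ s') * f s') + p * c := by
    intro s
    have : Q.mulVec f s = ∑ s', Q s s' * f s' := rfl
    rw [this, hc, Finset.mul_sum, ← Finset.sum_add_distrib]
    congr 1; ext s'; ring
  have hmass : ∀ s, ∑ s', (Q s s' - p * ψ s') = 1 - p := by
    intro s
    rw [Finset.sum_sub_distrib, hQ1, ← Finset.mul_sum, hψ1, mul_one]
  have hub : ∀ s, Q.mulVec f s ≤ (1 - p) * univ.sup' univ_nonempty f + p * c := by
    intro s
    rw [key s]
    have : ∑ s', (Q s s' - p * ψ s') * f s' ≤ (1 - p) * univ.sup' univ_nonempty f := by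
      calc ∑ s', (Q s s' - p * ψ s') * f s'
          ≤ ∑ s', (Q s s' - p * ψ s') * univ.sup' univ_nonempty f :=
            Finset.sum_le_sum fun i _ =>
              mul_le_mul_of_nonneg_left (le_sup' f (mem_univ i)) (by linarith [hd s i])
        _ = (1 - p) * univ.sup' univ_nonempty f := by
            rw [← Finset.sum_mul, hmass]
    linarith
  have hlb : ∀ s, (1 - p) * univ.inf' univ_nonempty f + p * c ≤ Q.mulVec f s := by
    intro s
    rw [key s]
    have : (1 - p) * univ.inf' univ_nonempty f ≤ ∑ s', (Q s s' - p * ψ s') * f s' := by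
      calc (1 - p) * univ.inf' univ_nonempty f
          = ∑ s', (Q s s' - p * ψ s') * univ.inf' univ_nonempty f := by
            rw [← Finset.sum_mul, hmass]
        _ ≤ ∑ s', (Q s s' - p * ψ s') * f s' :=
            Finset.sum_le_sum fun i _ =>
              mul_le_mul_of_nonneg_left (inf'_le f (mem_univ i)) (by linarith [hd s i])
    linarith
  have h1 : univ.sup' univ_nonempty (Q.mulVec f) ≤ (1 - p) * univ.sup' univ_nonempty f + p * c :=
    Finset.sup'_le _ _ fun s _ => hub s
  have h2 : (1 - p) * univ.inf' univ_nonempty f + p * c ≤ univ.inf' univ_nonempty (Q.mulVec f) :=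
    Finset.le_inf' _ _ fun s _ => hlb s
  linarith

end Helpers


/-- if there is an optimal policy `π*` whose induced kernel is `(m,p)`-Doeblin,
then the one-sample Bellman variance at the optimal q-function satisfies
`σ(q*)(s,a)² ≤ 4γ²(m/p)²`. -/
theorem one_sample_bellman_variance_le
    {S A : Type*} [Fintype S] [Nonempty S] [DecidableEq S] [Fintype A] [Nonempty A]
    -- the MDP data
    (r : S → A → ℝ) (hr0 : ∀ s a, 0 ≤ r s a) (hr1 : ∀ s a, r s a ≤ 1)
    (P : S → A → S → ℝ) (hP0 : ∀ s a s', 0 ≤ P s a s') (hP1 : ∀ s a, ∑ s', P s a s' = 1)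
    (γ : ℝ) (hγ0 : 0 < γ) (hγ1 : γ < 1)
    -- the optimal q-function (characterized by the Bellman optimality equation)
    (qstar : S → A → ℝ)
    (hqstar : ∀ s a, qstar s a = r s a + γ * ∑ s', P s a s' * (⨆ b, qstar s' b))
    -- an optimal policy π* (its q-function equals q*, i.e. q* solves its Bellman equation)
    (πstar : S → A)
    (hopt : ∀ s a, qstar s a = r s a + γ * ∑ s', P s a s' * qstar s' (πstar s'))
    -- the (m,p)-Doeblin condition for the induced kernel P_{π*}
    (m : ℕ) (p : ℝ) (hm : 0 < m) (hp0 : 0 < p) (hp1 : p ≤ 1)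
    (ψ : S → ℝ) (hψ0 : ∀ s', 0 ≤ ψ s') (hψ1 : ∑ s', ψ s' = 1)
    (hdoeb : ∀ s s', p * ψ s' ≤ ((Matrix.of fun u u' => P u (πstar u) u') ^ m) s s') :
    ∀ s a, γ ^ 2 * (∑ s', P s a s' * (⨆ b, qstar s' b) ^ 2 -
        (∑ s', P s a s' * (⨆ b, qstar s' b)) ^ 2) ≤
      4 * γ ^ 2 * ((m : ℝ) / p) ^ 2 := by
  intro s a
  -- notation
  set Pm : Matrix S S ℝ := Matrix.of fun u u' => P u (πstar u) u' with hPmdef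
  set w : S → ℝ := fun u => qstar u (πstar u) with hwdef
  set rπ : S → ℝ := fun u => r u (πstar u) with hrπdef
  have hPm0 : ∀ u u', 0 ≤ Pm u u' := fun u u' => hP0 _ _ _
  have hPm1 : ∀ u, ∑ u', Pm u u' = 1 := fun u => hP1 _ _
  set v : S → ℝ := fun u => ⨆ b, qstar u b with hvdef
  have hveq : ∀ u, (⨆ b, qstar u b) = v u := fun u => rfl
  simp only [hveq]
  -- abbreviations for sup'/inf'
  have sp_pair : ∀ f : S → ℝ, ∀ u, univ.inf' univ_nonempty f ≤ f u ∧
      f u ≤ univ.sup' univ_nonempty f :=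
    fun f u => ⟨inf'_le f (mem_univ u), le_sup' f (mem_univ u)⟩
  set sp : (S → ℝ) → ℝ :=
    fun f => univ.sup' univ_nonempty f - univ.inf' univ_nonempty f with hspdef
  have sp_nonneg : ∀ f : S → ℝ, 0 ≤ sp f := by
    intro f
    obtain ⟨u⟩ := (inferInstance : Nonempty S)
    have := sp_pair f u
    simp only [hspdef]
    linarith [this.1, this.2]
  -- the Bellman equation for w
  have hw : w = fun u => rπ u + γ * Pm.mulVec w u := by
    funext u
    exact hopt u (πstar u)
  -- iterates
  set U : ℕ → S → ℝ := fun k => (Pm ^ k).mulVec w with hUdef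
  have hU0 : U 0 = w := by simp [hUdef, Matrix.one_mulVec]
  have hrec : ∀ k u, U k u = (Pm ^ k).mulVec rπ u + γ * U (k + 1) u := by
    intro k u
    have h1 : U k = (Pm ^ k).mulVec (fun u => rπ u + γ * Pm.mulVec w u) := by
      rw [hUdef]; simp only []; rw [← hw]
    have h2 : (fun u => rπ u + γ * Pm.mulVec w u) = rπ + γ • Pm.mulVec w := by
      funext u; simp [Pi.smul_apply, smul_eq_mul]
    rw [h1, h2, Matrix.mulVec_add, Matrix.mulVec_smul]
    have h3 : (Pm ^ k).mulVec (Pm.mulVec w) = (Pm ^ (k + 1)).mulVec w := by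
      rw [Matrix.mulVec_mulVec, ← pow_succ]
    rw [h3]
    simp [hUdef, smul_eq_mul]
  -- each (Pm^k).mulVec rπ lies in [0,1]
  have hrπbd : ∀ k, sp ((Pm ^ k).mulVec rπ) ≤ 1 := by
    intro k
    obtain ⟨hk0, hk1⟩ := pow_stoch Pm hPm0 hPm1 k
    have hub : ∀ u, (Pm ^ k).mulVec rπ u ≤ 1 := by
      intro u
      have : (Pm ^ k).mulVec rπ u = ∑ u', (Pm ^ k) u u' * rπ u' := rfl
      rw [this]
      calc ∑ u', (Pm ^ k) u u' * rπ u' ≤ ∑ u', (Pm ^ k) u u' * 1 :=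
            Finset.sum_le_sum fun i _ =>
              mul_le_mul_of_nonneg_left (hr1 _ _) (hk0 u i)
        _ = 1 := by simp [hk1 u]
    have hlb : ∀ u, 0 ≤ (Pm ^ k).mulVec rπ u := by
      intro u
      have : (Pm ^ k).mulVec rπ u = ∑ u', (Pm ^ k) u u' * rπ u' := rfl
      rw [this]
      exact Finset.sum_nonneg fun i _ => mul_nonneg (hk0 u i) (hr0 _ _)
    have h1 : univ.sup' univ_nonempty ((Pm ^ k).mulVec rπ) ≤ 1 :=
      Finset.sup'_le _ _ fun u _ => hub u
    have h2 : (0:ℝ) ≤ univ.inf' univ_nonempty ((Pm ^ k).mulVec rπ) :=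
      Finset.le_inf' _ _ fun u _ => hlb u
    simp only [hspdef]; linarith
  -- one-step span inequality
  have hstep : ∀ k, sp (U k) ≤ 1 + sp (U (k + 1)) := by
    intro k
    have hub : ∀ u, U k u ≤ univ.sup' univ_nonempty ((Pm ^ k).mulVec rπ) +
        γ * univ.sup' univ_nonempty (U (k + 1)) := by
      intro u
      rw [hrec k u]
      have h1 := (sp_pair ((Pm ^ k).mulVec rπ) u).2
      have h2 := (sp_pair (U (k + 1)) u).2
      nlinarith
    have hlb : ∀ u, univ.inf' univ_nonempty ((Pm ^ k).mulVec rπ) +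
        γ * univ.inf' univ_nonempty (U (k + 1)) ≤ U k u := by
      intro u
      rw [hrec k u]
      have h1 := (sp_pair ((Pm ^ k).mulVec rπ) u).1
      have h2 := (sp_pair (U (k + 1)) u).1
      nlinarith
    have h1 : univ.sup' univ_nonempty (U k) ≤
        univ.sup' univ_nonempty ((Pm ^ k).mulVec rπ) +
        γ * univ.sup' univ_nonempty (U (k + 1)) :=
      Finset.sup'_le _ _ fun u _ => hub u
    have h2 : univ.inf' univ_nonempty ((Pm ^ k).mulVec rπ) +
        γ * univ.inf' univ_nonempty (U (k + 1)) ≤ univ.inf' univ_nonempty (U k) :=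
      Finset.le_inf' _ _ fun u _ => hlb u
    have h3 := hrπbd k
    have h4 := sp_nonneg (U (k + 1))
    simp only [hspdef] at *
    nlinarith
  -- iterate
  have hiter : ∀ k, sp (U 0) ≤ k + sp (U k) := by
    intro k
    induction k with
    | zero => simp
    | succ k ih =>
      have := hstep k
      push_cast
      push_cast at ih
      linarith
  -- Doeblin contraction at step m
  have hcontr : sp (U m) ≤ (1 - p) * sp w := by
    obtain ⟨hk0, hk1⟩ := pow_stoch Pm hPm0 hPm1 m
    have := doeblin_span (Pm ^ m) hk0 hk1 p hp1 ψ hψ1 (fun u u' => hdoeb u u') w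
    simpa [hUdef, hspdef] using this
  -- span of w bounded
  have hspw : sp w ≤ (m : ℝ) / p := by
    have h0 := hiter m
    rw [hU0] at h0
    rw [le_div_iff₀ hp0]
    nlinarith [sp_nonneg w, hcontr, h0]
  -- bounds relating v and w
  have hwub := fun u => (sp_pair w u).2
  have hwlb := fun u => (sp_pair w u).1
  set wmax := univ.sup' univ_nonempty w with hwmax
  set wmin := univ.inf' univ_nonempty w with hwmin
  have hvub : ∀ u, v u ≤ 1 + γ * wmax := by
    intro u
    refine ciSup_le fun b => ?_
    rw [hopt u b]
    have hsum : ∑ u', P u b u' * w u' ≤ wmax := stoch_le_sup _ (hP0 u b) (hP1 u b) w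
    have := hr1 u b
    nlinarith
  have hvlb : ∀ u, γ * wmin ≤ v u := by
    intro u
    have h1 : w u ≤ v u := le_ciSup (Set.Finite.bddAbove (Set.finite_range _)) (πstar u)
    have h2 : w u = rπ u + γ * ∑ u', Pm u u' * w u' := hopt u (πstar u)
    have hsum : wmin ≤ ∑ u', Pm u u' * w u' := inf_le_stoch _ (hPm0 u) (hPm1 u) w
    have := hr0 u (πstar u)
    have hrpos : 0 ≤ rπ u := this
    nlinarith
  -- span of v bounded by 2 m / p
  set D : ℝ := 2 * ((m : ℝ) / p) with hD
  have hmp1 : 1 ≤ (m : ℝ) / p := by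
    rw [le_div_iff₀ hp0]
    have : (1 : ℝ) ≤ (m : ℝ) := by exact_mod_cast hm
    linarith
  have hosc : ∀ u t, v u - v t ≤ D := by
    intro u t
    have h1 := hvub u
    have h2 := hvlb t
    have h3 : wmax - wmin = sp w := by simp [hspdef, hwmax, hwmin]
    have h4 : γ * (wmax - wmin) ≤ wmax - wmin := by
      nlinarith [sp_nonneg w, h3.symm ▸ sp_nonneg w]
    have h5 : wmax - wmin ≤ (m : ℝ) / p := h3 ▸ hspw
    simp only [hD]
    nlinarith
  -- the variance computation
  set μ : ℝ := ∑ u', P s a u' * v u' with hμ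
  have hμub : μ ≤ univ.sup' univ_nonempty v := stoch_le_sup _ (hP0 s a) (hP1 s a) v
  have hμlb : univ.inf' univ_nonempty v ≤ μ := inf_le_stoch _ (hP0 s a) (hP1 s a) v
  have hDsup : univ.sup' univ_nonempty v - univ.inf' univ_nonempty v ≤ D := by
    obtain ⟨u0, _, hu0⟩ := Finset.exists_mem_eq_sup' (univ_nonempty (α := S)) v
    obtain ⟨t0, _, ht0⟩ := Finset.exists_mem_eq_inf' (univ_nonempty (α := S)) v
    rw [hu0, ht0]
    exact hosc u0 t0
  have hterm : ∀ u', (v u' - μ) ^ 2 ≤ D ^ 2 := by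
    intro u'
    have h1 := (sp_pair v u').1
    have h2 := (sp_pair v u').2
    have hDnn : 0 ≤ D := by simp only [hD]; positivity
    have ha : -D ≤ v u' - μ := by linarith
    have hb : v u' - μ ≤ D := by linarith
    nlinarith
  have hvar : ∑ u', P s a u' * (v u' - μ) ^ 2 =
      (∑ u', P s a u' * v u' ^ 2) - μ ^ 2 := by
    have h1 : ∀ u', P s a u' * (v u' - μ) ^ 2 =
        P s a u' * v u' ^ 2 - 2 * μ * (P s a u' * v u') + μ ^ 2 * P s a u' := by
      intro u'; ring
    simp_rw [h1]
    rw [Finset.sum_add_distrib, Finset.sum_sub_distrib, ← Finset.mul_sum,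
      ← Finset.mul_sum, hP1, ← hμ]
    ring
  have hsumle : ∑ u', P s a u' * (v u' - μ) ^ 2 ≤ D ^ 2 := by
    calc ∑ u', P s a u' * (v u' - μ) ^ 2 ≤ ∑ u', P s a u' * D ^ 2 :=
          Finset.sum_le_sum fun i _ =>
            mul_le_mul_of_nonneg_left (hterm i) (hP0 s a i)
      _ = D ^ 2 := by rw [← Finset.sum_mul, hP1, one_mul]
  have hfinal : (∑ u', P s a u' * v u' ^ 2) - μ ^ 2 ≤ D ^ 2 := hvar ▸ hsumle
  have hγsq : (0:ℝ) ≤ γ ^ 2 := sq_nonneg γ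
  have hDexp : D ^ 2 = 4 * ((m : ℝ) / p) ^ 2 := by simp only [hD]; ring
  calc γ ^ 2 * (∑ u', P s a u' * v u' ^ 2 - (∑ u', P s a u' * v u') ^ 2)
      ≤ γ ^ 2 * D ^ 2 := by
        apply mul_le_mul_of_nonneg_left _ hγsq
        rw [← hμ]; exact hfinal
    _ = 4 * γ ^ 2 * ((m : ℝ) / p) ^ 2 := by rw [hDexp]; ring
end
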